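/- arXiv:1806.04046 — 6 statements merged into one kernel-verified Lean document; each statement's English description precedes it below -/
import Mathlib

section
/- For every u ∈ C_c^∞(ℝ_{>0} × ℝ), every r > 0, and the rescaled function u_r(x₁, x₂) := u(x₁^r, r x₂), the following three identities hold: (a) ∫ u_r² dμ = r^{−2} ∫ u² dμ; (b) ∫ (|x₁ ∂_{x₁}u_r|² + |∂_{x₂}u_r|²) dμ = ∫ (|x₁ ∂_{x₁}u|² + |∂_{x₂}u|²) dμ; and (c) if u ≠ 0, then for every α > 0, ∫ ( e^{α u_r² / ‖∇_𝔹 u_r‖₂²} − 1 ) dμ = r^{−2} ∫ ( e^{α u² / ‖∇_𝔹 u‖₂²} − 1 ) dμ. In particular the cone Moser–Trudinger inequality on ℝ²₊ is scale invariant. -/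
open MeasureTheory Real Set Filter
open scoped ENNReal

/-- The measure `dμ = (dx₁/x₁) dx₂` on the half-plane `ℝ_{>0} × ℝ`. -/
noncomputable def coneMeasure : Measure (ℝ × ℝ) :=
  (volume.restrict {p : ℝ × ℝ | 0 < p.1}).withDensity fun p => ENNReal.ofReal (1 / p.1)

/-- The squared length of the cone gradient `∇_𝔹 u = (x₁ ∂_{x₁} u, ∂_{x₂} u)`. -/
noncomputable def coneGradSq (u : ℝ × ℝ → ℝ) (p : ℝ × ℝ) : ℝ :=
  (p.1 * fderiv ℝ u p (1, 0)) ^ 2 + (fderiv ℝ u p (0, 1)) ^ 2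

/-- The diagonal linear map `(v₁, v₂) ↦ (a v₁, b v₂)`. -/
noncomputable def coneD (a b : ℝ) : (ℝ × ℝ) →L[ℝ] (ℝ × ℝ) :=
  (a • ContinuousLinearMap.id ℝ ℝ).prodMap (b • ContinuousLinearMap.id ℝ ℝ)

lemma coneD_apply (a b : ℝ) (v : ℝ × ℝ) : coneD a b v = (a * v.1, b * v.2) := by
  simp [coneD, smul_eq_mul, Prod.map]

lemma coneD_det (a b : ℝ) : (coneD a b).det = a * b := by
  rw [ContinuousLinearMap.det, ← LinearMap.det_toMatrix (Module.Basis.finTwoProd ℝ),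
    Matrix.det_fin_two]
  simp [LinearMap.toMatrix_apply, coneD, Module.Basis.finTwoProd, smul_eq_mul, Prod.map]

lemma coneD_eq (a b : ℝ) : coneD a b =
    ((a • ContinuousLinearMap.fst ℝ ℝ ℝ).prod (b • ContinuousLinearMap.snd ℝ ℝ ℝ)) := by
  ext v <;> simp [coneD, Prod.map, smul_eq_mul]

lemma cone_hasFDerivAt {r : ℝ} {p : ℝ × ℝ} (hp : 0 < p.1) :
    HasFDerivAt (fun p : ℝ × ℝ => (p.1 ^ r, r * p.2)) (coneD (r * p.1 ^ (r - 1)) r) p := by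
  rw [coneD_eq]
  have h1 : HasFDerivAt (fun q : ℝ × ℝ => q.1 ^ r)
      ((r * p.1 ^ (r - 1)) • ContinuousLinearMap.fst ℝ ℝ ℝ) p :=
    (Real.hasDerivAt_rpow_const (Or.inl hp.ne')).comp_hasFDerivAt p hasFDerivAt_fst
  have h2 : HasFDerivAt (fun q : ℝ × ℝ => r * q.2)
      (r • ContinuousLinearMap.snd ℝ ℝ ℝ) p := by
    have h := (hasFDerivAt_snd (𝕜 := ℝ) (E := ℝ) (F := ℝ) (p := p)).const_mul r
    exact h
  exact h1.prodMk h2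

lemma map_withDensity_comp {α β : Type*} [MeasurableSpace α] [MeasurableSpace β] (ν : Measure α)
    {Φ : α → β} (hΦ : Measurable Φ) {h : β → ENNReal} (hh : Measurable h) :
    Measure.map Φ (ν.withDensity (h ∘ Φ)) = (Measure.map Φ ν).withDensity h := by
  ext s hs
  rw [Measure.map_apply hΦ hs, withDensity_apply _ (hΦ hs), withDensity_apply _ hs,
    setLIntegral_map hs hh hΦ]
  rfl

lemma cone_map {r : ℝ} (hr : 0 < r) :
    Measure.map (fun p : ℝ × ℝ => (p.1 ^ r, r * p.2)) coneMeasure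
      = ENNReal.ofReal (r⁻¹ ^ 2) • coneMeasure := by
  set S : Set (ℝ × ℝ) := {p : ℝ × ℝ | 0 < p.1} with hSdef
  have hS : MeasurableSet S := measurableSet_lt measurable_const measurable_fst
  set Φ : ℝ × ℝ → ℝ × ℝ := fun p => (p.1 ^ r, r * p.2) with hΦdef
  have hΦ : Measurable Φ := by fun_prop
  set h : ℝ × ℝ → ENNReal := fun q => ENNReal.ofReal (r⁻¹ ^ 2) * ENNReal.ofReal (1 / q.1)
    with hhdef
  have hh : Measurable h := by fun_prop
  set g : ℝ × ℝ → ENNReal := fun p => ENNReal.ofReal |(coneD (r * p.1 ^ (r - 1)) r).det|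
    with hgdef
  have hg : Measurable g := by
    simp only [hgdef, coneD_det]
    fun_prop
  have hdens : (fun p : ℝ × ℝ => ENNReal.ofReal (1 / p.1)) =ᵐ[volume.restrict S]
      fun p => g p * (h ∘ Φ) p := by
    filter_upwards [ae_restrict_mem hS] with p hp
    have hp1 : (0 : ℝ) < p.1 := hp
    have hpr : (0 : ℝ) < p.1 ^ r := Real.rpow_pos_of_pos hp1 r
    have hpr1 : (0 : ℝ) < p.1 ^ (r - 1) := Real.rpow_pos_of_pos hp1 _
    simp only [hgdef, hhdef, Function.comp, coneD_det, hΦdef]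
    rw [abs_of_pos (by positivity), ← ENNReal.ofReal_mul (by positivity),
      ← ENNReal.ofReal_mul (by positivity)]
    congr 1
    have e1 : p.1 ^ (r - 1) * p.1 = p.1 ^ r := by
      rw [← Real.rpow_add_one hp1.ne' (r - 1), sub_add_cancel]
    field_simp
    nlinarith [sq_nonneg r, e1, mul_pos hpr1 hp1]
  have hinj : Set.InjOn Φ S := by
    intro a ha b hb hab
    have h1 : a.1 ^ r = b.1 ^ r := congrArg Prod.fst hab
    have h2 : r * a.2 = r * b.2 := congrArg Prod.snd hab
    have ha1 : (0:ℝ) < a.1 := ha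
    have hb1 : (0:ℝ) < b.1 := hb
    have : a.1 = b.1 := by
      have := congrArg (fun x : ℝ => x ^ r⁻¹) h1
      simpa [Real.rpow_rpow_inv ha1.le hr.ne', Real.rpow_rpow_inv hb1.le hr.ne'] using this
    exact Prod.ext this (mul_left_cancel₀ hr.ne' h2)
  have himg : Φ '' S = S := by
    ext q
    constructor
    · rintro ⟨p, hp, rfl⟩
      exact Real.rpow_pos_of_pos hp r
    · intro hq
      refine ⟨(q.1 ^ r⁻¹, q.2 / r), Real.rpow_pos_of_pos hq r⁻¹, ?_⟩
      simp only [hΦdef]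
      rw [Real.rpow_inv_rpow (le_of_lt hq) hr.ne', mul_div_cancel₀ _ hr.ne']
  have hf' : ∀ p ∈ S, HasFDerivWithinAt Φ (coneD (r * p.1 ^ (r - 1)) r) S p :=
    fun p hp => (cone_hasFDerivAt (r := r) hp).hasFDerivWithinAt
  have hmap : Measure.map Φ ((volume.restrict S).withDensity g) = volume.restrict S := by
    have := map_withDensity_abs_det_fderiv_eq_addHaar (volume : Measure (ℝ × ℝ)) hS.nullMeasurableSet hf' hinj
    rwa [himg] at this
  have key1 : coneMeasure = ((volume.restrict S).withDensity g).withDensity (h ∘ Φ) := by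
    unfold coneMeasure
    rw [← hSdef, withDensity_congr_ae hdens, ← withDensity_mul _ hg (hh.comp hΦ)]
    rfl
  have key2 : Measure.map Φ coneMeasure = (volume.restrict S).withDensity h := by
    rw [key1, map_withDensity_comp _ hΦ hh, hmap]
  have key3 : (volume.restrict S).withDensity h = ENNReal.ofReal (r⁻¹ ^ 2) • coneMeasure := by
    unfold coneMeasure
    rw [← hSdef, ← withDensity_smul _ (by fun_prop)]
    rfl
  rw [key2, key3]

lemma cone_ae_pos : ∀ᵐ p ∂coneMeasure, 0 < p.1 := by
  have hS : MeasurableSet {p : ℝ × ℝ | 0 < p.1} :=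
    measurableSet_lt measurable_const measurable_fst
  have h1 : ∀ᵐ p ∂(volume.restrict {p : ℝ × ℝ | 0 < p.1}), 0 < p.1 := ae_restrict_mem hS
  exact Eventually.filter_mono (withDensity_absolutelyContinuous _ _).ae_le h1

lemma cone_integral_comp (r : ℝ) (hr : 0 < r) {f : ℝ × ℝ → ℝ} (hf : Continuous f) :
    ∫ p, f (p.1 ^ r, r * p.2) ∂coneMeasure = r⁻¹ ^ 2 * ∫ p, f p ∂coneMeasure := by
  have hΦ : Measurable fun p : ℝ × ℝ => (p.1 ^ r, r * p.2) := by fun_prop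
  rw [← integral_map hΦ.aemeasurable hf.aestronglyMeasurable, cone_map hr,
    integral_smul_measure, ENNReal.toReal_ofReal (by positivity), smul_eq_mul]

/-- Scale invariance of the cone Moser–Trudinger inequality under
`u_r(x₁, x₂) = u(x₁^r, r x₂)` (Remark after Theorem 3.2). -/
theorem cone_moser_trudinger_scale_invariance (u : ℝ × ℝ → ℝ)
    (hu : ContDiff ℝ (⊤ : ℕ∞) u) (hc : HasCompactSupport u)
    (hs : tsupport u ⊆ {p : ℝ × ℝ | 0 < p.1})
    (r : ℝ) (hr : 0 < r) (ur : ℝ × ℝ → ℝ)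
    (hur : ur = fun p => u (p.1 ^ r, r * p.2)) :
    (∫ p, ur p ^ 2 ∂coneMeasure) = r⁻¹ ^ 2 * ∫ p, u p ^ 2 ∂coneMeasure ∧
    (∫ p, coneGradSq ur p ∂coneMeasure) = (∫ p, coneGradSq u p ∂coneMeasure) ∧
    (u ≠ 0 → ∀ α : ℝ, 0 < α →
      ∫⁻ p, ENNReal.ofReal
          (Real.exp (α * ur p ^ 2 / ∫ q, coneGradSq ur q ∂coneMeasure) - 1) ∂coneMeasure =
        ENNReal.ofReal (r⁻¹ ^ 2) *
          ∫⁻ p, ENNReal.ofReal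
            (Real.exp (α * u p ^ 2 / ∫ q, coneGradSq u q ∂coneMeasure) - 1) ∂coneMeasure) := by
  have hΦ : Measurable fun p : ℝ × ℝ => (p.1 ^ r, r * p.2) := by fun_prop
  have hucont : Continuous u := hu.continuous
  -- part (a)
  have hA : (∫ p, ur p ^ 2 ∂coneMeasure) = r⁻¹ ^ 2 * ∫ p, u p ^ 2 ∂coneMeasure := by
    rw [hur]
    exact cone_integral_comp r hr (f := fun q => u q ^ 2) (by fun_prop)
  -- gradient identity
  have hgrad : ∀ᵐ p ∂coneMeasure,
      coneGradSq ur p = r ^ 2 * coneGradSq u (p.1 ^ r, r * p.2) := by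
    filter_upwards [cone_ae_pos] with p hp
    have hd : HasFDerivAt (fun p : ℝ × ℝ => (p.1 ^ r, r * p.2))
        (coneD (r * p.1 ^ (r - 1)) r) p := cone_hasFDerivAt hp
    have hu' : HasFDerivAt u (fderiv ℝ u (p.1 ^ r, r * p.2)) (p.1 ^ r, r * p.2) :=
      ((hu.differentiable (by simp)) _).hasFDerivAt
    have hcomp : HasFDerivAt ur
        ((fderiv ℝ u (p.1 ^ r, r * p.2)).comp (coneD (r * p.1 ^ (r - 1)) r)) p := by
      rw [hur]; exact hu'.comp p hd
    have e1 : (fderiv ℝ u (p.1 ^ r, r * p.2)) ((r * p.1 ^ (r - 1) : ℝ), (0 : ℝ))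
        = (r * p.1 ^ (r - 1)) * (fderiv ℝ u (p.1 ^ r, r * p.2)) (1, 0) := by
      have hv : ((r * p.1 ^ (r - 1) : ℝ), (0 : ℝ)) = (r * p.1 ^ (r - 1)) • ((1 : ℝ), (0 : ℝ)) := by
        simp [Prod.smul_mk]
      rw [hv, ContinuousLinearMap.map_smul, smul_eq_mul]
    have e2 : (fderiv ℝ u (p.1 ^ r, r * p.2)) ((0 : ℝ), r)
        = r * (fderiv ℝ u (p.1 ^ r, r * p.2)) (0, 1) := by
      have hv : ((0 : ℝ), r) = r • ((0 : ℝ), (1 : ℝ)) := by simp [Prod.smul_mk]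
      rw [hv, ContinuousLinearMap.map_smul, smul_eq_mul]
    have epow : p.1 ^ (r - 1) * p.1 = p.1 ^ r := by
      rw [← Real.rpow_add_one hp.ne' (r - 1), sub_add_cancel]
    unfold coneGradSq
    rw [hcomp.fderiv]
    simp only [ContinuousLinearMap.coe_comp', Function.comp_apply, coneD_apply,
      mul_one, mul_zero, e1, e2]
    rw [← epow]
    ring
  -- continuity of coneGradSq u
  have hfdcont : Continuous (fderiv ℝ u) := hu.continuous_fderiv (by simp)
  have hcgcont : Continuous (coneGradSq u) := by
    unfold coneGradSq
    have h1 : Continuous fun p : ℝ × ℝ => (fderiv ℝ u p) (1, 0) :=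
      hfdcont.clm_apply continuous_const
    have h2 : Continuous fun p : ℝ × ℝ => (fderiv ℝ u p) (0, 1) :=
      hfdcont.clm_apply continuous_const
    exact ((continuous_fst.mul h1).pow 2).add (h2.pow 2)
  -- part (b)
  have hB : (∫ p, coneGradSq ur p ∂coneMeasure) = ∫ p, coneGradSq u p ∂coneMeasure := by
    rw [integral_congr_ae hgrad, integral_const_mul,
      cone_integral_comp r hr hcgcont]
    field_simp
  refine ⟨hA, hB, ?_⟩
  intro _ α _
  have hpt : ∀ p : ℝ × ℝ, ENNReal.ofReal
      (Real.exp (α * ur p ^ 2 / ∫ q, coneGradSq ur q ∂coneMeasure) - 1)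
      = (fun q : ℝ × ℝ => ENNReal.ofReal
          (Real.exp (α * u q ^ 2 / ∫ q, coneGradSq u q ∂coneMeasure) - 1))
        (p.1 ^ r, r * p.2) := by
    intro p
    rw [hB, hur]
  have hGm : Measurable fun q : ℝ × ℝ => ENNReal.ofReal
      (Real.exp (α * u q ^ 2 / ∫ q, coneGradSq u q ∂coneMeasure) - 1) := by
    have : Continuous fun q : ℝ × ℝ => ENNReal.ofReal
        (Real.exp (α * u q ^ 2 / ∫ q, coneGradSq u q ∂coneMeasure) - 1) := by
      exact ENNReal.continuous_ofReal.comp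
        ((Real.continuous_exp.comp ((continuous_const.mul (hucont.pow 2)).div_const _)).sub continuous_const)
    exact this.measurable
  calc ∫⁻ p, ENNReal.ofReal
        (Real.exp (α * ur p ^ 2 / ∫ q, coneGradSq ur q ∂coneMeasure) - 1) ∂coneMeasure
      = ∫⁻ p, (fun q : ℝ × ℝ => ENNReal.ofReal
          (Real.exp (α * u q ^ 2 / ∫ q, coneGradSq u q ∂coneMeasure) - 1))
          (p.1 ^ r, r * p.2) ∂coneMeasure := by
        exact lintegral_congr hpt
    _ = ∫⁻ q, ENNReal.ofReal
          (Real.exp (α * u q ^ 2 / ∫ q, coneGradSq u q ∂coneMeasure) - 1)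
          ∂(Measure.map (fun p : ℝ × ℝ => (p.1 ^ r, r * p.2)) coneMeasure) :=
        (lintegral_map hGm hΦ).symm
    _ = ENNReal.ofReal (r⁻¹ ^ 2) * ∫⁻ p, ENNReal.ofReal
          (Real.exp (α * u p ^ 2 / ∫ q, coneGradSq u q ∂coneMeasure) - 1) ∂coneMeasure := by
        rw [cone_map hr, lintegral_smul_measure, smul_eq_mul]
end

section
/- For each integer k ≥ 1 define w_k : (0,∞) → ℝ by w_k(r) = k^{1/2}/√(4π) for 0 < r ≤ e^{−k/2}, w_k(r) = (−2 ln r)/(√(4π) · √k) for e^{−k/2} < r ≤ 1, and w_k(r) = 0 for r > 1. Then: (i) 2π ∫₀^∞ w_k′(r)² r dr = 1, where w_k′ denotes the derivative of w_k, which exists except at the two points r = e^{−k/2} and r = 1; (ii) 2π ∫₀^∞ w_k(r)² r dr → 0 as k → ∞; and (iii) 2π ∫₀^1 e^{4π w_k(r)²} r dr ≥ 1/2. -/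
/-!
Put `ρ = e^{-k/2}`. Off `{ρ, 1}` the function `w_k` is locally constant or equal to
`-2 log r / √(4πk)`, so `w_k'² r = 1 / (πk r)` on `(ρ, 1)` and `0` elsewhere, and
`2π ∫ w_k'² r dr = (2/k) log (1/ρ) = 1`.
On `(0, ρ]` we have `|log r| ≥ k/2`, which gives `w_k² ≤ (log r)² / (πk)` on all of `(0, 1]`;
together with `(log r)² r = (log r · √r)² < 4` this bounds `2π ∫ w_k² r dr` by `8/k`.
Finally `e^{4π w_k²} ≥ 1`, and `4π w_k² ≤ k` makes the exponential integrable on `(0, 1]`.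
-/

open MeasureTheory Real Set Filter

/-- The Moser sequence of truncated logarithms, in the radial variable `r = |x|`. -/
noncomputable def moserW (k : ℕ) (r : ℝ) : ℝ :=
  if r ≤ Real.exp (-(k : ℝ) / 2) then Real.sqrt k / Real.sqrt (4 * π)
  else if r ≤ 1 then -2 * Real.log r / (Real.sqrt (4 * π) * Real.sqrt k)
  else 0

local notation "ρ" k:max => Real.exp (-(k : ℝ) / 2)

section
variable {k : ℕ} {r : ℝ}

lemma moserRadius_le_one (k : ℕ) : ρ k ≤ 1 :=
  exp_le_one_iff.mpr (by have := k.cast_nonneg (α := ℝ); linarith)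

lemma log_moserRadius (k : ℕ) : log (ρ k) = -(k : ℝ) / 2 := log_exp _

lemma moserW_of_le (h : r ≤ ρ k) : moserW k r = √k / √(4 * π) := if_pos h

lemma moserW_of_mem_Ioc (h : r ∈ Ioc (ρ k) 1) :
    moserW k r = -2 * log r / (√(4 * π) * √k) := by
  rw [moserW, if_neg h.1.not_ge, if_pos h.2]

lemma moserW_of_one_lt (h : 1 < r) : moserW k r = 0 := by
  rw [moserW, if_neg ((moserRadius_le_one k).trans_lt h).not_ge, if_neg h.not_ge]

lemma log_mem_Ioc_of_mem_Ioc (h : r ∈ Ioc (ρ k) 1) : log r ∈ Ioc (-(k : ℝ) / 2) 0 := by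
  have hr : 0 < r := (exp_pos _).trans h.1
  refine ⟨?_, log_nonpos hr.le h.2⟩
  rw [← log_moserRadius]
  exact log_lt_log (exp_pos _) h.1

lemma sq_sqrt_four_pi_mul_sqrt (k : ℕ) : (√(4 * π) * √k) ^ 2 = 4 * π * k := by
  rw [mul_pow, sq_sqrt (by positivity), sq_sqrt k.cast_nonneg]

lemma moserW_sq_of_le (h : r ≤ ρ k) : moserW k r ^ 2 = k / (4 * π) := by
  rw [moserW_of_le h, div_pow, sq_sqrt k.cast_nonneg, sq_sqrt (by positivity)]

lemma moserW_sq_of_mem_Ioc (h : r ∈ Ioc (ρ k) 1) : moserW k r ^ 2 = log r ^ 2 / (π * k) := by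
  rw [moserW_of_mem_Ioc h, div_pow, sq_sqrt_four_pi_mul_sqrt]
  ring

lemma moserW_sq_le (k : ℕ) (r : ℝ) : moserW k r ^ 2 ≤ k / (4 * π) := by
  rcases le_or_gt r (ρ k) with hρ | hρ
  · exact (moserW_sq_of_le hρ).le
  rcases le_or_gt r 1 with h1 | h1
  · have hlog := log_mem_Ioc_of_mem_Ioc ⟨hρ, h1⟩
    have hk : (0 : ℝ) < k := by linarith [hlog.1, hlog.2]
    rw [moserW_sq_of_mem_Ioc ⟨hρ, h1⟩]
    calc log r ^ 2 / (π * k) ≤ (k / 2) ^ 2 / (π * k) :=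
          div_le_div_of_nonneg_right (sq_le_sq' (by linarith [hlog.1]) (by linarith [hlog.2]))
            (by positivity)
      _ = k / (4 * π) := by field_simp; ring
  · rw [moserW_of_one_lt h1, zero_pow two_ne_zero]
    positivity

lemma moserW_sq_le_log_sq_div (hk : 0 < k) (hr : r ∈ Ioc 0 1) :
    moserW k r ^ 2 ≤ log r ^ 2 / (π * k) := by
  rcases le_or_gt r (ρ k) with hρ | hρ
  · have hlog : log r ≤ -(k : ℝ) / 2 := log_moserRadius k ▸ log_le_log hr.1 hρ
    rw [moserW_sq_of_le hρ]
    calc (k : ℝ) / (4 * π) = (k / 2) ^ 2 / (π * k) := by field_simp; ring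
      _ ≤ log r ^ 2 / (π * k) :=
          div_le_div_of_nonneg_right (by nlinarith [k.cast_nonneg (α := ℝ)]) (by positivity)
  · exact (moserW_sq_of_mem_Ioc ⟨hρ, hr.2⟩).le

lemma moserW_sq_mul_le (hk : 0 < k) (hr : r ∈ Ioc 0 1) :
    moserW k r ^ 2 * r ≤ 4 / (π * k) := by
  have hlog : |log r * r ^ (1 / 2 : ℝ)| < 2 := by
    simpa using abs_log_mul_self_rpow_lt r (1 / 2) hr.1 hr.2 (by norm_num)
  have hsq : log r ^ 2 * r ≤ 4 := by
    have : (log r * r ^ (1 / 2 : ℝ)) ^ 2 = log r ^ 2 * r := by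
      rw [mul_pow, ← sqrt_eq_rpow, sq_sqrt hr.1.le]
    nlinarith [abs_lt.mp hlog]
  calc moserW k r ^ 2 * r ≤ log r ^ 2 / (π * k) * r := by
        gcongr
        · exact hr.1.le
        · exact moserW_sq_le_log_sq_div hk hr
    _ = log r ^ 2 * r / (π * k) := by ring
    _ ≤ 4 / (π * k) := by gcongr

lemma deriv_moserW_of_lt (h : r < ρ k) : deriv (moserW k) r = 0 := by
  have : moserW k =ᶠ[nhds r] fun _ => √k / √(4 * π) := by
    filter_upwards [Iio_mem_nhds h] with x hx using moserW_of_le (le_of_lt hx)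
  rw [this.deriv_eq, deriv_const]

lemma deriv_moserW_of_one_lt (h : 1 < r) : deriv (moserW k) r = 0 := by
  have : moserW k =ᶠ[nhds r] fun _ => 0 := by
    filter_upwards [Ioi_mem_nhds h] with x hx using moserW_of_one_lt hx
  rw [this.deriv_eq, deriv_const]

lemma hasDerivAt_moserW (h : r ∈ Ioo (ρ k) 1) :
    HasDerivAt (moserW k) (-2 * r⁻¹ / (√(4 * π) * √k)) r := by
  have hr : r ≠ 0 := ((exp_pos _).trans h.1).ne'
  have : moserW k =ᶠ[nhds r] fun x => -2 * log x / (√(4 * π) * √k) := by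
    filter_upwards [Ioo_mem_nhds h.1 h.2] with x hx
      using moserW_of_mem_Ioc (Ioo_subset_Ioc_self hx)
  exact (((hasDerivAt_log hr).const_mul (-2)).div_const _).congr_of_eventuallyEq this

lemma deriv_moserW_sq_mul_ae_eq (k : ℕ) :
    (fun r => deriv (moserW k) r ^ 2 * r) =ᵐ[volume]
      (Ioo (ρ k) 1).indicator fun r => (π * k)⁻¹ * r⁻¹ := by
  have hnull : ∀ᵐ r : ℝ, r ∉ ({ρ k, 1} : Set ℝ) :=
    measure_eq_zero_iff_ae_notMem.mp ((toFinite _).measure_zero _)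
  filter_upwards [hnull] with r hr
  simp only [mem_insert_iff, mem_singleton_iff, not_or] at hr
  rcases lt_or_gt_of_ne hr.1 with hρ | hρ
  · rw [deriv_moserW_of_lt hρ, indicator_of_notMem (notMem_Ioo_of_le hρ.le)]
    ring
  rcases lt_or_gt_of_ne hr.2 with h1 | h1
  · have hmem : r ∈ Ioo (ρ k) 1 := ⟨hρ, h1⟩
    rw [(hasDerivAt_moserW hmem).deriv, indicator_of_mem hmem, div_pow,
      sq_sqrt_four_pi_mul_sqrt]
    field_simp
    ring
  · rw [deriv_moserW_of_one_lt h1, indicator_of_notMem (notMem_Ioo_of_ge h1.le)]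
    ring

theorem moserW_energy_eq_one (hk : 1 ≤ k) :
    2 * π * ∫ r in Ioi (0 : ℝ), deriv (moserW k) r ^ 2 * r = 1 := by
  have hρ : 0 < ρ k := exp_pos _
  rw [integral_congr_ae (ae_restrict_of_ae (deriv_moserW_sq_mul_ae_eq k)),
    setIntegral_indicator measurableSet_Ioo,
    inter_eq_right.mpr (Ioo_subset_Ioi_self.trans (Ioi_subset_Ioi hρ.le)), integral_const_mul,
    ← integral_Ioc_eq_integral_Ioo, ← intervalIntegral.integral_of_le (moserRadius_le_one k),
    integral_inv_of_pos hρ one_pos, one_div, log_inv, log_moserRadius]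
  have : (k : ℝ) ≠ 0 := by positivity
  field_simp

@[fun_prop]
lemma measurable_moserW (k : ℕ) : Measurable (moserW k) :=
  Measurable.ite measurableSet_Iic measurable_const
    (Measurable.ite measurableSet_Iic (by fun_prop) measurable_const)

lemma abs_integral_moserW_sq_mul_le (hk : 0 < k) :
    |∫ r in Ioi (0 : ℝ), moserW k r ^ 2 * r| ≤ 4 / (π * k) := by
  have hvanish : ∀ r ∈ Ioi (0 : ℝ) \ Ioc 0 1, moserW k r ^ 2 * r = 0 := fun r hr => by
    rw [moserW_of_one_lt (not_le.mp fun h => hr.2 ⟨hr.1, h⟩), zero_pow two_ne_zero, zero_mul]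
  rw [setIntegral_eq_of_subset_of_forall_sdiff_eq_zero measurableSet_Ioi Ioc_subset_Ioi_self
    hvanish]
  have hbound : ∀ r ∈ Ioc (0 : ℝ) 1, ‖moserW k r ^ 2 * r‖ ≤ 4 / (π * k) := fun r hr => by
    rw [Real.norm_eq_abs, abs_of_nonneg (mul_nonneg (sq_nonneg _) hr.1.le)]
    exact moserW_sq_mul_le hk hr
  simpa using norm_setIntegral_le_of_norm_le_const (μ := volume) measure_Ioc_lt_top hbound

theorem tendsto_moserW_sq_integral :
    Tendsto (fun k : ℕ => 2 * π * ∫ r in Ioi (0 : ℝ), moserW k r ^ 2 * r) atTop (nhds 0) := by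
  refine squeeze_zero_norm' ?_ (tendsto_const_div_atTop_nhds_zero_nat 8)
  filter_upwards [eventually_gt_atTop 0] with k hk
  rw [norm_mul, Real.norm_eq_abs, Real.norm_eq_abs, abs_of_pos (by positivity)]
  calc 2 * π * |∫ r in Ioi (0 : ℝ), moserW k r ^ 2 * r| ≤ 2 * π * (4 / (π * k)) := by
        gcongr
        exact abs_integral_moserW_sq_mul_le hk
    _ = 8 / k := by field_simp; ring

lemma integrableOn_exp_moserW_sq_mul (k : ℕ) :
    IntegrableOn (fun r => exp (4 * π * moserW k r ^ 2) * r) (Ioc 0 1) := by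
  refine Measure.integrableOn_of_bounded (M := exp k) measure_Ioc_lt_top.ne
    (by fun_prop) ?_
  filter_upwards [ae_restrict_mem measurableSet_Ioc] with r hr
  have hexp : 4 * π * moserW k r ^ 2 ≤ k := by
    have := moserW_sq_le k r
    rwa [le_div_iff₀ (by positivity), mul_comm] at this
  rw [Real.norm_eq_abs, abs_of_nonneg (mul_nonneg (exp_pos _).le hr.1.le)]
  calc exp (4 * π * moserW k r ^ 2) * r ≤ exp k * 1 :=
        mul_le_mul (exp_le_exp.mpr hexp) hr.2 hr.1.le (exp_pos _).le
    _ = exp k := mul_one _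

theorem one_half_le_moserW_exp_integral (k : ℕ) :
    1 / 2 ≤ 2 * π * ∫ r in Ioc (0 : ℝ) 1, exp (4 * π * moserW k r ^ 2) * r := by
  have hmono : ∫ r in Ioc (0 : ℝ) 1, r ≤ ∫ r in Ioc (0 : ℝ) 1, exp (4 * π * moserW k r ^ 2) * r :=
    setIntegral_mono_on continuous_id.integrableOn_Ioc (integrableOn_exp_moserW_sq_mul k)
      measurableSet_Ioc fun r hr =>
        le_mul_of_one_le_left hr.1.le (one_le_exp (by positivity))
  have hid : ∫ r in Ioc (0 : ℝ) 1, r = 1 / 2 := by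
    rw [← intervalIntegral.integral_of_le zero_le_one, integral_id]
    norm_num
  nlinarith [pi_gt_three]

end

/-- Properties (3.18)–(3.20) of the Moser sequence: unit cone-gradient norm,
vanishing `L²` norm, and exponential integral bounded below. -/
theorem moser_sequence_properties :
    (∀ k : ℕ, 1 ≤ k → 2 * π * ∫ r in Set.Ioi (0:ℝ), deriv (moserW k) r ^ 2 * r = 1) ∧
    Filter.Tendsto (fun k : ℕ => 2 * π * ∫ r in Set.Ioi (0:ℝ), moserW k r ^ 2 * r)
      Filter.atTop (nhds 0) ∧
    (∀ k : ℕ, 1 ≤ k →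
      1 / 2 ≤ 2 * π * ∫ r in Set.Ioc (0:ℝ) 1, Real.exp (4 * π * moserW k r ^ 2) * r) :=
  ⟨fun _ hk => moserW_energy_eq_one hk, tendsto_moserW_sq_integral,
    fun k _ => one_half_le_moserW_exp_integral k⟩
end

section
/- For every q ≥ 2 there exists a constant C₁ > 0, depending only on q, with the following property: if p satisfies 1/p + 1/q = 1, w : [0,∞) → ℝ is continuously differentiable with w(0) = 0, w′(t) ≥ 0 for all t ≥ 0, and ∫₀^∞ w′(t)^q dt ≤ 1, then for every β ≤ 1, ∫₀^∞ e^{β w(t)^p − t} dt ≤ C₁. -/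
/-!
By Hölder, `w t ≤ t^(1/p) (∫₀ᵗ w'^q)^(1/q)`, so `w t ^ p ≤ t`.
Put `E_s = {t > 0 | t - w t ^ p < s}`.
If `t₁ ∈ E_s` then the energy left beyond `t₁` is at most `(q - 1) s / t₁`; once
`t₁ ≥ 2^q (q - 1) s`, Hölder on `[t₁, t₂]` together with a weighted convexity bound for `(a + b)^p`
shows that every later `t₂ ∈ E_s` satisfies `t₂ - t₁ ≤ 2 (2^q + 1) s`. Hence `|E_s| = O(s)`, and
`∫ e^(β w^p - t) ≤ ∑ₙ e^(-n) |E_(n+1)|` converges.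
-/

open MeasureTheory Real Set Filter

lemma Real.HolderConjugate.sub_one_mul_sub_one {p q : ℝ} (hpq : p.HolderConjugate q) :
    (p - 1) * (q - 1) = 1 := by
  linear_combination hpq.mul_eq_add

theorem add_rpow_le_one_add_rpow_mul_add {p a b ε : ℝ} (hp : 1 ≤ p) (ha : 0 ≤ a) (hb : 0 ≤ b)
    (hε : 0 < ε) :
    (a + b) ^ p ≤ (1 + ε) ^ (p - 1) * a ^ p + (1 + ε⁻¹) ^ (p - 1) * b ^ p := by
  have h1 : 0 < 1 + ε := by linarith
  have h2 : 0 < 1 + ε⁻¹ := by positivity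
  have hconv := (convexOn_rpow hp).2 (mem_Ici.2 (mul_nonneg h1.le ha))
    (mem_Ici.2 (mul_nonneg h2.le hb)) (inv_pos.2 h1).le (inv_pos.2 h2).le
    (by field_simp; ring)
  simp only [smul_eq_mul] at hconv
  rw [inv_mul_cancel_left₀ h1.ne', inv_mul_cancel_left₀ h2.ne', mul_rpow h1.le ha,
    mul_rpow h2.le hb, ← mul_assoc, ← mul_assoc, ← rpow_neg_one, ← rpow_neg_one (1 + ε⁻¹),
    ← rpow_add h1, ← rpow_add h2, neg_add_eq_sub] at hconv
  exact hconv

/-- The choice `ε = 2^q δ` in `add_rpow_le_one_add_rpow_mul_add` keeps the first coefficient at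
`1 + O(δ)` while `((1 + ε⁻¹) δ)^(p-1) ≤ (2^(1-q))^(p-1) = 1/2`. -/
lemma Real.HolderConjugate.add_rpow_mul_rpow_le {p q a d δ : ℝ} (hpq : p.HolderConjugate q)
    (hq : 2 ≤ q) (ha : 0 ≤ a) (hd : 0 ≤ d) (hδ : 0 < δ) (hδq : δ ≤ (2 ^ q)⁻¹) :
    (a ^ (1 / p) + d ^ (1 / p) * δ ^ (1 / q)) ^ p ≤ (1 + (p - 1) * (2 ^ q * δ)) * a + d / 2 := by
  set ε : ℝ := 2 ^ q * δ
  have hε : 0 < ε := by positivity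
  have hconv := add_rpow_le_one_add_rpow_mul_add hpq.lt.le (rpow_nonneg ha (1 / p))
    (mul_nonneg (rpow_nonneg hd (1 / p)) (rpow_nonneg hδ.le (1 / q))) hε
  rw [← rpow_mul ha, one_div_mul_cancel hpq.ne_zero, rpow_one,
    mul_rpow (rpow_nonneg hd _) (rpow_nonneg hδ.le _), ← rpow_mul hd,
    one_div_mul_cancel hpq.ne_zero, rpow_one, ← rpow_mul hδ.le, one_div_mul_eq_div,
    hpq.div_conj_eq_sub_one, mul_left_comm, ← mul_rpow (by positivity) hδ.le] at hconv
  have hfirst : (1 + ε) ^ (p - 1) ≤ 1 + (p - 1) * ε :=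
    rpow_one_add_le_one_add_mul_self (by linarith) hpq.sub_one_pos.le
      (by nlinarith [hpq.sub_one_mul_sub_one, hpq.sub_one_pos, hq])
  have hsecond : ((1 + ε⁻¹) * δ) ^ (p - 1) ≤ 1 / 2 :=
    calc ((1 + ε⁻¹) * δ) ^ (p - 1) ≤ (2 ^ (q - 1))⁻¹ ^ (p - 1) := by
          refine rpow_le_rpow (by positivity) ?_ hpq.sub_one_pos.le
          rw [rpow_sub_one two_ne_zero, inv_div,
            show (1 + ε⁻¹) * δ = δ + (2 ^ q)⁻¹ by simp only [ε]; field_simp, div_eq_mul_inv]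
          linarith
      _ = 1 / 2 := by
          rw [inv_rpow (by positivity), ← rpow_mul zero_le_two, mul_comm,
            hpq.sub_one_mul_sub_one, rpow_one, one_div]
  nlinarith [mul_le_mul_of_nonneg_right hfirst ha, mul_le_mul_of_nonneg_left hsecond hd]

theorem integral_le_sub_rpow_mul_integral_rpow {p q a b : ℝ} (hpq : p.HolderConjugate q)
    (hab : a ≤ b) {f : ℝ → ℝ} (hf : ContinuousOn f (Icc a b)) (hf0 : ∀ t ∈ Icc a b, 0 ≤ f t) :
    ∫ t in a..b, f t ≤ (b - a) ^ (1 / p) * (∫ t in a..b, f t ^ q) ^ (1 / q) := by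
  obtain ⟨C, hC⟩ := isCompact_Icc.exists_bound_of_continuousOn hf
  have hf' : ContinuousOn f (Ioc a b) := hf.mono Ioc_subset_Icc_self
  have hmem : MemLp f (ENNReal.ofReal q) (volume.restrict (Ioc a b)) :=
    .of_bound (hf'.aestronglyMeasurable measurableSet_Ioc) C
      ((ae_restrict_iff' measurableSet_Ioc).2 <|
        ae_of_all _ fun t ht => hC t (Ioc_subset_Icc_self ht))
  have hnonneg : 0 ≤ᵐ[volume.restrict (Ioc a b)] f :=
    (ae_restrict_iff' measurableSet_Ioc).2 (ae_of_all _ fun t ht => hf0 t (Ioc_subset_Icc_self ht))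
  have := integral_mul_le_Lp_mul_Lq_of_nonneg hpq (ae_of_all _ fun _ => zero_le_one) hnonneg
    (memLp_const 1) hmem
  simpa [intervalIntegral.integral_of_le hab, hab, hpq.pos.ne'] using this

theorem ofReal_intervalIntegral_le_setLIntegral_Ioi {f : ℝ → ℝ} {a b : ℝ} (hab : a ≤ b)
    (hf : IntervalIntegrable f volume a b) (hf0 : ∀ t ∈ Ioc a b, 0 ≤ f t) :
    ENNReal.ofReal (∫ t in a..b, f t) ≤ ∫⁻ t in Ioi a, ENNReal.ofReal (f t) := by
  rw [intervalIntegral.integral_of_le hab, ofReal_integral_eq_lintegral_ofReal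
    ((intervalIntegrable_iff_integrableOn_Ioc_of_le hab).1 hf)
    ((ae_restrict_iff' measurableSet_Ioc).2 (ae_of_all _ hf0))]
  exact lintegral_mono_set Ioc_subset_Ioi_self

theorem ContinuousOn.intervalIntegrable_of_Ici {f : ℝ → ℝ} {c a b : ℝ} (hf : ContinuousOn f (Ici c))
    (ha : c ≤ a) (hab : a ≤ b) : IntervalIntegrable f volume a b :=
  (hf.mono fun _ ht => ha.trans (uIcc_of_le hab ▸ ht).1).intervalIntegrable

theorem lintegral_le_tsum_mul_measure {α : Type*} [MeasurableSpace α] {μ : Measure α}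
    {f : α → ENNReal} {c : ℕ → ENNReal} {A : ℕ → Set α}
    (h : ∀ᵐ x ∂μ, ∃ n, x ∈ A n ∧ f x ≤ c n) :
    ∫⁻ x, f x ∂μ ≤ ∑' n, c n * μ (A n) := by
  calc ∫⁻ x, f x ∂μ ≤ ∫⁻ x, ∑' n, (toMeasurable μ (A n)).indicator (fun _ => c n) x ∂μ := by
        refine lintegral_mono_ae (h.mono fun x ⟨n, hxn, hfx⟩ => ?_)
        refine le_trans ?_ (ENNReal.le_tsum n)
        rwa [indicator_of_mem (subset_toMeasurable μ (A n) hxn)]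
    _ = ∑' n, c n * μ (A n) := by
        rw [lintegral_tsum fun n => (aemeasurable_const.indicator (measurableSet_toMeasurable μ _))]
        simp_rw [lintegral_indicator_const (measurableSet_toMeasurable μ _), measure_toMeasurable]

theorem succ_mul_exp_neg_le (n : ℕ) : ((n : ℝ) + 1) * exp (-n) ≤ (3 / 4) ^ n := by
  have hn : (n : ℝ) + 1 ≤ 2 ^ n := by exact_mod_cast Nat.lt_two_pow_self
  have he : exp (-1) ≤ 3 / 8 := by
    rw [exp_neg, inv_le_comm₀ (exp_pos 1) (by norm_num)]
    linarith [exp_one_gt_d9]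
  calc ((n : ℝ) + 1) * exp (-n) ≤ 2 ^ n * (3 / 8) ^ n := by
        rw [show -(n : ℝ) = n * (-1) by ring, exp_nat_mul]
        gcongr
    _ = (3 / 4) ^ n := by rw [← mul_pow]; norm_num

theorem tsum_ofReal_exp_neg_mul_le {C : ℝ} (hC : 0 ≤ C) :
    ∑' n : ℕ, ENNReal.ofReal (exp (-n)) * ENNReal.ofReal (C * (n + 1)) ≤
      ENNReal.ofReal (4 * C) := by
  calc ∑' n : ℕ, ENNReal.ofReal (exp (-n)) * ENNReal.ofReal (C * (n + 1))
      ≤ ∑' n : ℕ, ENNReal.ofReal C * ENNReal.ofReal (3 / 4) ^ n := by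
        refine ENNReal.tsum_le_tsum fun n => ?_
        rw [← ENNReal.ofReal_mul (exp_pos _).le, ← ENNReal.ofReal_pow (by norm_num),
          ← ENNReal.ofReal_mul hC]
        refine ENNReal.ofReal_le_ofReal ?_
        nlinarith [succ_mul_exp_neg_le n]
    _ = ENNReal.ofReal (4 * C) := by
        rw [ENNReal.tsum_mul_left, ENNReal.tsum_geometric, mul_comm,
          ENNReal.ofReal_mul (by norm_num)]
        congr 1
        rw [← ENNReal.ofReal_one, ← ENNReal.ofReal_sub _ (by norm_num),
          ← ENNReal.ofReal_inv_of_pos (by norm_num)]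
        norm_num

section Calculus

variable {c : ℝ} {w w' : ℝ → ℝ}

theorem integral_eq_sub_of_hasDerivWithinAt_Ici
    (hw : ∀ t ∈ Ici c, HasDerivWithinAt w (w' t) (Ici c) t) (hw' : ContinuousOn w' (Ici c))
    {a b : ℝ} (ha : c ≤ a) (hab : a ≤ b) :
    ∫ t in a..b, w' t = w b - w a := by
  refine intervalIntegral.integral_eq_sub_of_hasDeriv_right_of_le hab
    (fun t ht => (hw t (ha.trans ht.1)).continuousWithinAt.mono fun x hx => ha.trans hx.1)
    (fun t ht => ?_)
    (hw'.intervalIntegrable_of_Ici ha hab)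
  exact (hw t (ha.trans ht.1.le)).mono fun x hx => ha.trans (ht.1.le.trans (le_of_lt hx))

theorem sub_le_rpow_mul_integral_rpow {p q : ℝ} (hpq : p.HolderConjugate q)
    (hw : ∀ t ∈ Ici c, HasDerivWithinAt w (w' t) (Ici c) t) (hw' : ContinuousOn w' (Ici c))
    (hw'0 : ∀ t, c ≤ t → 0 ≤ w' t) {a b : ℝ} (ha : c ≤ a) (hab : a ≤ b) :
    w b - w a ≤ (b - a) ^ (1 / p) * (∫ t in a..b, w' t ^ q) ^ (1 / q) := by
  rw [← integral_eq_sub_of_hasDerivWithinAt_Ici hw hw' ha hab]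
  exact integral_le_sub_rpow_mul_integral_rpow hpq hab (hw'.mono fun t ht => ha.trans ht.1)
    fun t ht => hw'0 t (ha.trans ht.1)

end Calculus

/-- `F t` stands for the energy `∫₀ᵗ w'^q`; the last two fields are what Hölder's inequality gives
on `[0, t]` and on `[a, b]`. -/
structure HolderControl (p q : ℝ) (w F : ℝ → ℝ) : Prop where
  nonneg : ∀ t, 0 ≤ t → 0 ≤ w t
  energy_nonneg : ∀ t, 0 ≤ t → 0 ≤ F t
  energy_le_one : ∀ t, 0 ≤ t → F t ≤ 1
  le_rpow_mul : ∀ t, 0 ≤ t → w t ≤ t ^ (1 / p) * F t ^ (1 / q)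
  le_add_rpow_mul : ∀ a b, 0 ≤ a → a ≤ b → w b ≤ w a + (b - a) ^ (1 / p) * (1 - F a) ^ (1 / q)

theorem holderControl_of_hasDerivWithinAt {p q : ℝ} {w w' : ℝ → ℝ} (hpq : p.HolderConjugate q)
    (hw : ∀ t ∈ Ici 0, HasDerivWithinAt w (w' t) (Ici 0) t) (hw' : ContinuousOn w' (Ici 0))
    (hw0 : w 0 = 0) (hw'0 : ∀ t, 0 ≤ t → 0 ≤ w' t)
    (henergy : ∫⁻ t in Ioi 0, ENNReal.ofReal (w' t ^ q) ≤ 1) :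
    HolderControl p q w fun t => ∫ x in 0..t, w' x ^ q := by
  have hw'q : ContinuousOn (fun t => w' t ^ q) (Ici 0) :=
    hw'.rpow_const fun _ _ => Or.inr hpq.symm.nonneg
  have hw'q0 : ∀ t, 0 ≤ t → 0 ≤ w' t ^ q := fun t ht => rpow_nonneg (hw'0 t ht) q
  have energy_nonneg : ∀ a b : ℝ, 0 ≤ a → a ≤ b → 0 ≤ ∫ x in a..b, w' x ^ q := fun a b ha hab =>
    intervalIntegral.integral_nonneg hab fun t ht => hw'q0 t (ha.trans ht.1)
  have energy_le_one : ∀ t, 0 ≤ t → ∫ x in 0..t, w' x ^ q ≤ 1 := fun t ht =>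
    ENNReal.ofReal_le_one.1 <| (ofReal_intervalIntegral_le_setLIntegral_Ioi ht
      (hw'q.intervalIntegrable_of_Ici le_rfl ht) fun x hx => hw'q0 x hx.1.le).trans henergy
  refine ⟨fun t ht => ?_, fun t ht => energy_nonneg 0 t le_rfl ht, energy_le_one,
    fun t ht => ?_, fun a b ha hab => ?_⟩
  · have hftc := integral_eq_sub_of_hasDerivWithinAt_Ici hw hw' le_rfl ht
    rw [hw0, sub_zero] at hftc
    exact hftc ▸ intervalIntegral.integral_nonneg ht fun x hx => hw'0 x hx.1
  · simpa [hw0] using sub_le_rpow_mul_integral_rpow hpq hw hw' hw'0 le_rfl ht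
  · have hsplit : ∫ x in a..b, w' x ^ q = (∫ x in 0..b, w' x ^ q) - ∫ x in 0..a, w' x ^ q :=
      (intervalIntegral.integral_interval_sub_left
        (hw'q.intervalIntegrable_of_Ici le_rfl (ha.trans hab))
        (hw'q.intervalIntegrable_of_Ici le_rfl ha)).symm
    have := sub_le_rpow_mul_integral_rpow hpq hw hw' hw'0 ha hab
    have := rpow_le_rpow (energy_nonneg a b ha hab)
      (show ∫ x in a..b, w' x ^ q ≤ 1 - ∫ x in 0..a, w' x ^ q by
        linarith [energy_le_one b (ha.trans hab)]) hpq.symm.one_div_nonneg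
    nlinarith [rpow_nonneg (sub_nonneg.2 hab) (1 / p)]

namespace HolderControl

variable {p q : ℝ} {w F : ℝ → ℝ}

lemma le_rpow (h : HolderControl p q w F) (hpq : p.HolderConjugate q) {t : ℝ} (ht : 0 ≤ t) :
    w t ≤ t ^ (1 / p) :=
  (h.le_rpow_mul t ht).trans <| mul_le_of_le_one_right (rpow_nonneg ht _)
    (rpow_le_one (h.energy_nonneg t ht) (h.energy_le_one t ht) hpq.symm.one_div_nonneg)

lemma rpow_le (h : HolderControl p q w F) (hpq : p.HolderConjugate q) {t : ℝ} (ht : 0 ≤ t) :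
    w t ^ p ≤ t := by
  simpa [← rpow_mul ht, hpq.ne_zero] using
    rpow_le_rpow (h.nonneg t ht) (h.le_rpow hpq ht) hpq.nonneg

lemma one_sub_energy_le (h : HolderControl p q w F) (hpq : p.HolderConjugate q) (hq : 2 ≤ q)
    {s t : ℝ} (hs : 0 < s) (hst : s ≤ t) (hlt : t - s < w t ^ p) :
    1 - F t ≤ (q - 1) * s / t := by
  have ht : 0 < t := hs.trans_le hst
  have hst' : s / t ≤ 1 := (div_le_one ht).2 hst
  have hF := h.energy_nonneg t ht.le
  have hwt : w t ^ p ≤ t * F t ^ (p - 1) := by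
    have := rpow_le_rpow (h.nonneg t ht.le) (h.le_rpow_mul t ht.le) hpq.nonneg
    rwa [mul_rpow (rpow_nonneg ht.le _) (rpow_nonneg hF _), ← rpow_mul ht.le, ← rpow_mul hF,
      one_div_mul_cancel hpq.ne_zero, rpow_one, one_div_mul_eq_div,
      hpq.div_conj_eq_sub_one] at this
  have hFp : 1 - s / t < F t ^ (p - 1) := by
    rw [one_sub_div ht.ne', div_lt_iff₀ ht]
    linarith
  have hbernoulli : 1 - (q - 1) * (s / t) ≤ (1 - s / t) ^ (q - 1) := by
    simpa [sub_eq_add_neg] using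
      one_add_mul_self_le_rpow_one_add (s := -(s / t)) (by linarith) (p := q - 1) (by linarith)
  have hraise : (1 - s / t) ^ (q - 1) < F t := by
    have := rpow_lt_rpow (by linarith) hFp (by linarith : 0 < q - 1)
    rwa [← rpow_mul hF, hpq.sub_one_mul_sub_one, rpow_one] at this
  rw [mul_div_assoc]
  linarith

lemma sub_le_of_lt_rpow (h : HolderControl p q w F) (hpq : p.HolderConjugate q) (hq : 2 ≤ q)
    {s t₁ t₂ : ℝ} (hs : 0 < s) (ht₁ : 2 ^ q * (q - 1) * s ≤ t₁) (h12 : t₁ ≤ t₂)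
    (hlt₁ : t₁ - s < w t₁ ^ p) (hlt₂ : t₂ - s < w t₂ ^ p) :
    t₂ - t₁ ≤ 2 * (2 ^ q + 1) * s := by
  have h2q : 4 ≤ (2 : ℝ) ^ q := by
    have := rpow_le_rpow_of_exponent_le one_le_two hq
    rwa [rpow_two, show (2 : ℝ) ^ 2 = 4 by norm_num] at this
  have hst₁ : s ≤ t₁ := le_trans (le_mul_of_one_le_left hs.le (by nlinarith)) ht₁
  have ht₁0 : 0 < t₁ := hs.trans_le hst₁
  set δ := (q - 1) * s / t₁
  have hδ0 : 0 < δ := div_pos (mul_pos (by linarith) hs) ht₁0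
  have hδq : δ ≤ (2 ^ q)⁻¹ := by
    rw [le_inv_comm₀ hδ0 (by positivity), inv_div, le_div_iff₀ (mul_pos (by linarith) hs)]
    linarith
  have hw₂ : w t₂ ≤ t₁ ^ (1 / p) + (t₂ - t₁) ^ (1 / p) * δ ^ (1 / q) := by
    have := h.le_add_rpow_mul t₁ t₂ ht₁0.le h12
    have := h.le_rpow hpq ht₁0.le
    have := rpow_le_rpow (sub_nonneg.2 (h.energy_le_one t₁ ht₁0.le))
      (h.one_sub_energy_le hpq hq hs hst₁ hlt₁) hpq.symm.one_div_nonneg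
    have := rpow_nonneg (sub_nonneg.2 h12) (1 / p)
    nlinarith
  have hcross : (p - 1) * (2 ^ q * δ) * t₁ = 2 ^ q * s := by
    calc (p - 1) * (2 ^ q * δ) * t₁ = (p - 1) * (q - 1) * (2 ^ q * s) * (t₁ / t₁) := by
          simp only [δ]; ring
      _ = 2 ^ q * s := by rw [hpq.sub_one_mul_sub_one, div_self ht₁0.ne']; ring
  have := rpow_le_rpow (h.nonneg t₂ (ht₁0.le.trans h12)) hw₂ hpq.nonneg
  have := hpq.add_rpow_mul_rpow_le hq ht₁0.le (sub_nonneg.2 h12) hδ0 hδq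
  nlinarith

lemma volume_sub_rpow_lt_le (h : HolderControl p q w F) (hpq : p.HolderConjugate q) (hq : 2 ≤ q)
    {s : ℝ} (hs : 0 < s) :
    volume ({t | t - w t ^ p < s} ∩ Ioi 0) ≤
      ENNReal.ofReal ((2 ^ q * (q - 1) + 2 * (2 ^ q + 1)) * s) := by
  set E := {t | t - w t ^ p < s} ∩ Ioi 0
  set L := 2 ^ q * (q - 1) * s
  have hL : 0 ≤ L := by
    have : 0 ≤ q - 1 := by linarith
    positivity
  have hgap : ∀ x ∈ E ∩ Ici L, ∀ y ∈ E ∩ Ici L, x ≤ y → y - x ≤ 2 * (2 ^ q + 1) * s :=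
    fun x hx y hy hxy =>
      h.sub_le_of_lt_rpow hpq hq hs hx.2 hxy (by linarith [hx.1.1.out]) (by linarith [hy.1.1.out])
  have hdiam : Metric.ediam (E ∩ Ici L) ≤ ENNReal.ofReal (2 * (2 ^ q + 1) * s) := by
    refine Metric.ediam_le fun x hx y hy => ?_
    rw [edist_dist, Real.dist_eq]
    refine ENNReal.ofReal_le_ofReal (abs_sub_le_iff.2 ?_)
    rcases le_total x y with hxy | hyx
    · exact ⟨by linarith [hgap x hx y hy hxy, hs], hgap x hx y hy hxy⟩
    · exact ⟨hgap y hy x hx hyx, by linarith [hgap y hy x hx hyx, hs]⟩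
  have hsub : E ⊆ Ioc 0 L ∪ E ∩ Ici L := fun t ht =>
    (lt_or_ge L t).elim (fun hlt => Or.inr ⟨ht, hlt.le⟩) (fun hle => Or.inl ⟨ht.2, hle⟩)
  calc volume E ≤ volume (Ioc 0 L) + volume (E ∩ Ici L) :=
        (measure_mono hsub).trans (measure_union_le _ _)
    _ ≤ ENNReal.ofReal L + ENNReal.ofReal (2 * (2 ^ q + 1) * s) := by
        rw [Real.volume_Ioc, sub_zero]
        exact add_le_add le_rfl ((volume_le_diam _).trans hdiam)
    _ = _ := by rw [← ENNReal.ofReal_add hL (by positivity), add_mul]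

end HolderControl

/-- Moser's one-dimensional lemma (inequalities (3.12)–(3.13)): for `q ≥ 2` there is a
constant `C₁ = C₁(q)` bounding `∫₀^∞ e^{β w^p − t} dt` for all admissible `w` and `β ≤ 1`. -/
theorem moser_one_dimensional_lemma (q : ℝ) (hq : 2 ≤ q) :
    ∃ C₁ : ℝ, 0 < C₁ ∧ ∀ p : ℝ, 1 / p + 1 / q = 1 →
      ∀ w w' : ℝ → ℝ,
        (∀ t ∈ Set.Ici (0:ℝ), HasDerivWithinAt w (w' t) (Set.Ici 0) t) →
        ContinuousOn w' (Set.Ici 0) →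
        w 0 = 0 → (∀ t, 0 ≤ t → 0 ≤ w' t) →
        (∫⁻ t in Set.Ioi (0:ℝ), ENNReal.ofReal (w' t ^ q)) ≤ 1 →
        ∀ β : ℝ, β ≤ 1 →
          ∫⁻ t in Set.Ioi (0:ℝ), ENNReal.ofReal (Real.exp (β * w t ^ p - t)) ≤
            ENNReal.ofReal C₁ := by
  have hC : 0 < 2 ^ q * (q - 1) + 2 * (2 ^ q + 1) := by
    have : 0 ≤ q - 1 := by linarith
    positivity
  refine ⟨4 * (2 ^ q * (q - 1) + 2 * (2 ^ q + 1)), by positivity, ?_⟩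
  intro p hpq_eq w w' hw hw' hw0 hw'0 henergy β hβ
  have hpq : p.HolderConjugate q := by
    have h1q : 1 / q ≤ 1 / 2 := one_div_le_one_div_of_le two_pos hq
    simpa using holderConjugate_one_div (by linarith) (by positivity) hpq_eq
  have h := holderControl_of_hasDerivWithinAt hpq hw hw' hw0 hw'0 henergy
  calc ∫⁻ t in Ioi 0, ENNReal.ofReal (exp (β * w t ^ p - t))
      ≤ ∑' n : ℕ, ENNReal.ofReal (exp (-n)) *
          volume.restrict (Ioi 0) {t | t - w t ^ p < n + 1} := by
        refine lintegral_le_tsum_mul_measure <| (ae_restrict_iff' measurableSet_Ioi).2 <|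
          ae_of_all _ fun t (ht : 0 < t) => ⟨⌊t - w t ^ p⌋₊, by simp [Nat.lt_floor_add_one], ?_⟩
        have := Nat.floor_le (sub_nonneg.2 (h.rpow_le hpq ht.le))
        have := mul_le_of_le_one_left (rpow_nonneg (h.nonneg t ht.le) p) hβ
        exact ENNReal.ofReal_le_ofReal (exp_le_exp.2 (by linarith))
    _ ≤ ∑' n : ℕ, ENNReal.ofReal (exp (-n)) *
          ENNReal.ofReal ((2 ^ q * (q - 1) + 2 * (2 ^ q + 1)) * (n + 1)) := by
        refine ENNReal.tsum_le_tsum fun n => ?_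
        gcongr
        rw [Measure.restrict_apply' measurableSet_Ioi]
        exact h.volume_sub_rpow_lt_le hpq hq (by positivity)
    _ ≤ _ := tsum_ofReal_exp_neg_mul_le hC.le
end

section
/- Let q > 1 and p satisfy 1/p + 1/q = 1. If w : [0,∞) → ℝ is continuously differentiable with w(0) = 0, w′(t) ≥ 0 for all t ≥ 0, and ∫₀^∞ w′(t)^q dt < ∞, then lim_{t→∞} w(t)/t^{1/p} = 0, and consequently for every β > 0 the integral ∫₀^∞ e^{β w(t)^p − t} dt is finite. -/
/-!
By Hölder's inequality, `w t - w s = ∫ₛᵗ w' ≤ (∫ₛ^∞ w'^q)^{1/q} (t - s)^{1/p}`, and the tail energy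
`∫ₛ^∞ w'^q` tends to `0` as `s → ∞`; hence `w t = o(t^{1/p})`. Then `β w(t)^p ≤ t / 2` for large
`t`, so the integrand is dominated by `e^{-t/2}` near infinity and is continuous on compacts.
-/

open MeasureTheory Real Set Filter Topology
open scoped ENNReal

lemma ENNReal.lintegral_le_lintegral_rpow_mul_measure_univ {α : Type*} [MeasurableSpace α]
    (μ : Measure α) {p q : ℝ} (hpq : p.HolderConjugate q) {f : α → ℝ≥0∞}
    (hf : AEMeasurable f μ) :
    ∫⁻ x, f x ∂μ ≤ (∫⁻ x, f x ^ p ∂μ) ^ (1 / p) * μ univ ^ (1 / q) := by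
  simpa using ENNReal.lintegral_mul_le_Lp_mul_Lq μ hpq hf aemeasurable_const (g := fun _ => 1)

lemma tendsto_setLIntegral_Ioi_atTop {μ : Measure ℝ} {f : ℝ → ℝ≥0∞} {a : ℝ}
    (hf : ∫⁻ x in Ioi a, f x ∂μ ≠ ∞) :
    Tendsto (fun s => ∫⁻ x in Ioi s, f x ∂μ) atTop (𝓝 0) := by
  have h := tendsto_measure_iInter_atTop (μ := μ.withDensity f) (s := Ioi)
    (fun _ => measurableSet_Ioi.nullMeasurableSet) (fun _ _ hst => Ioi_subset_Ioi hst)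
    ⟨a, by rwa [withDensity_apply _ measurableSet_Ioi]⟩
  have hempty : ⋂ s : ℝ, Ioi s = ∅ :=
    eq_empty_of_forall_notMem fun x hx => lt_irrefl x (mem_iInter.1 hx x)
  rw [hempty, measure_empty] at h
  simpa only [Function.comp_def, withDensity_apply _ measurableSet_Ioi] using h

section

variable {w w' : ℝ → ℝ} {a : ℝ}

lemma integral_eq_sub_of_hasDerivWithinAt_Ici_s7
    (hderiv : ∀ t ∈ Ici a, HasDerivWithinAt w (w' t) (Ici a) t) (hcont : ContinuousOn w' (Ici a))
    {s t : ℝ} (hs : a ≤ s) (hst : s ≤ t) :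
    ∫ x in s..t, w' x = w t - w s := by
  have hsub : Icc s t ⊆ Ici a := Icc_subset_Ici_self.trans (Ici_subset_Ici.mpr hs)
  refine intervalIntegral.integral_eq_sub_of_hasDeriv_right_of_le hst
    (fun x hx => (hderiv x (hsub hx)).continuousWithinAt.mono hsub) (fun x hx => ?_)
    ((hcont.mono hsub).intervalIntegrable_of_Icc hst)
  exact (hderiv x (hsub (Ioo_subset_Icc_self hx))).mono fun y hy => hs.trans hx.1.le |>.trans hy.le

lemma monotoneOn_of_hasDerivWithinAt_Ici_nonneg
    (hderiv : ∀ t ∈ Ici a, HasDerivWithinAt w (w' t) (Ici a) t) (hw' : ∀ t ∈ Ici a, 0 ≤ w' t) :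
    MonotoneOn w (Ici a) := by
  refine monotoneOn_of_hasDerivWithinAt_nonneg (f' := w') (convex_Ici a)
    (fun t ht => (hderiv t ht).continuousWithinAt) (fun t ht => ?_) (fun t ht => ?_)
  · rw [interior_Ici] at ht ⊢
    exact (hderiv t (Ioi_subset_Ici_self ht)).mono Ioi_subset_Ici_self
  · exact hw' t (interior_subset ht)

lemma ofReal_sub_le_setLIntegral_Ioi_rpow_mul {p q : ℝ} (hpq : q.HolderConjugate p)
    (hderiv : ∀ t ∈ Ici a, HasDerivWithinAt w (w' t) (Ici a) t) (hcont : ContinuousOn w' (Ici a))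
    (hw' : ∀ t ∈ Ici a, 0 ≤ w' t) {s t : ℝ} (hs : a ≤ s) (hst : s ≤ t) :
    ENNReal.ofReal (w t - w s) ≤
      (∫⁻ x in Ioi s, ENNReal.ofReal (w' x ^ q)) ^ (1 / q) * ENNReal.ofReal (t - s) ^ (1 / p) := by
  have hsub : Ioc s t ⊆ Ici a := fun x hx => hs.trans hx.1.le
  have hw'_nonneg : ∀ᵐ x ∂volume.restrict (Ioc s t), 0 ≤ w' x :=
    (ae_restrict_mem measurableSet_Ioc).mono fun x hx => hw' x (hsub hx)
  have hint : IntegrableOn w' (Ioc s t) :=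
    ((hcont.mono (Icc_subset_Ici_self.trans (Ici_subset_Ici.mpr hs))).integrableOn_compact
      isCompact_Icc).mono_set Ioc_subset_Icc_self
  have hmeas : AEMeasurable (fun x => ENNReal.ofReal (w' x)) (volume.restrict (Ioc s t)) :=
    ENNReal.measurable_ofReal.comp_aemeasurable hint.aemeasurable
  calc ENNReal.ofReal (w t - w s)
      = ∫⁻ x in Ioc s t, ENNReal.ofReal (w' x) := by
        rw [← integral_eq_sub_of_hasDerivWithinAt_Ici_s7 hderiv hcont hs hst,
          intervalIntegral.integral_of_le hst, ofReal_integral_eq_lintegral_ofReal hint hw'_nonneg]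
    _ ≤ (∫⁻ x in Ioc s t, ENNReal.ofReal (w' x) ^ q) ^ (1 / q) * volume (Ioc s t) ^ (1 / p) := by
        simpa only [Measure.restrict_apply_univ] using
          ENNReal.lintegral_le_lintegral_rpow_mul_measure_univ _ hpq hmeas
    _ = (∫⁻ x in Ioc s t, ENNReal.ofReal (w' x ^ q)) ^ (1 / q) *
          ENNReal.ofReal (t - s) ^ (1 / p) := by
        rw [Real.volume_Ioc, lintegral_congr_ae (hw'_nonneg.mono fun x hx =>
          ENNReal.ofReal_rpow_of_nonneg hx hpq.nonneg)]
    _ ≤ _ := by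
        gcongr ?_ ^ _ * _
        · exact hpq.one_div_nonneg
        · exact lintegral_mono_set Ioc_subset_Ioi_self

lemma sub_le_setLIntegral_Ioi_toReal_rpow_mul {p q : ℝ} (hpq : q.HolderConjugate p)
    (hderiv : ∀ t ∈ Ici a, HasDerivWithinAt w (w' t) (Ici a) t) (hcont : ContinuousOn w' (Ici a))
    (hw' : ∀ t ∈ Ici a, 0 ≤ w' t) {s t : ℝ}
    (htail : ∫⁻ x in Ioi s, ENNReal.ofReal (w' x ^ q) ≠ ∞) (hs : a ≤ s) (hst : s ≤ t) :
    w t - w s ≤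
      (∫⁻ x in Ioi s, ENNReal.ofReal (w' x ^ q)).toReal ^ (1 / q) * (t - s) ^ (1 / p) := by
  have h := ofReal_sub_le_setLIntegral_Ioi_rpow_mul hpq hderiv hcont hw' hs hst
  rwa [ENNReal.ofReal_le_iff_le_toReal (ENNReal.mul_ne_top
      (ENNReal.rpow_ne_top_of_nonneg hpq.one_div_nonneg htail)
      (ENNReal.rpow_ne_top_of_nonneg hpq.symm.one_div_nonneg ENNReal.ofReal_ne_top)),
    ENNReal.toReal_mul, ← ENNReal.toReal_rpow, ← ENNReal.toReal_rpow,
    ENNReal.toReal_ofReal (sub_nonneg.2 hst)] at h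

theorem tendsto_div_rpow_one_div_atTop {p q : ℝ} (hpq : q.HolderConjugate p)
    (hderiv : ∀ t ∈ Ici 0, HasDerivWithinAt w (w' t) (Ici 0) t) (hcont : ContinuousOn w' (Ici 0))
    (hw' : ∀ t ∈ Ici 0, 0 ≤ w' t) (hint : ∫⁻ t in Ioi 0, ENNReal.ofReal (w' t ^ q) ≠ ∞) :
    Tendsto (fun t => w t / t ^ (1 / p)) atTop (𝓝 0) := by
  set tail : ℝ → ℝ≥0∞ := fun s => ∫⁻ x in Ioi s, ENNReal.ofReal (w' x ^ q)
  have htail : Tendsto (fun s => (tail s).toReal ^ (1 / q)) atTop (𝓝 0) := by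
    have h := ((ENNReal.tendsto_toReal ENNReal.zero_ne_top).comp
      (tendsto_setLIntegral_Ioi_atTop hint)).rpow_const (Or.inr hpq.one_div_nonneg)
    rwa [ENNReal.toReal_zero, zero_rpow hpq.one_div_ne_zero] at h
  have hbound : ∀ s t, 0 ≤ s → s ≤ t → w t ≤ w s + (tail s).toReal ^ (1 / q) * t ^ (1 / p) := by
    intro s t hs hst
    have h := sub_le_setLIntegral_Ioi_toReal_rpow_mul hpq hderiv hcont hw'
      ((lintegral_mono_set (Ioi_subset_Ioi hs)).trans_lt hint.lt_top).ne hs hst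
    have hts : (t - s) ^ (1 / p) ≤ t ^ (1 / p) :=
      rpow_le_rpow (sub_nonneg.2 hst) (by linarith) hpq.symm.one_div_nonneg
    linarith [mul_le_mul_of_nonneg_left hts (rpow_nonneg (tail s).toReal_nonneg (1 / q))]
  have hdecay (c : ℝ) : Tendsto (fun t => c / t ^ (1 / p)) atTop (𝓝 0) :=
    tendsto_const_nhds.div_atTop (tendsto_rpow_atTop hpq.symm.one_div_pos)
  have hmono := monotoneOn_of_hasDerivWithinAt_Ici_nonneg hderiv hw'
  rw [tendsto_order]
  refine ⟨fun b hb => ?_, fun ε hε => ?_⟩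
  · filter_upwards [(hdecay (w 0)).eventually (lt_mem_nhds hb), eventually_gt_atTop 0]
      with t hw0 ht
    exact hw0.trans_le (div_le_div_of_nonneg_right (hmono self_mem_Ici ht.le ht.le)
      (rpow_nonneg ht.le _))
  · obtain ⟨s, hs, hs0⟩ :=
      ((htail.eventually (gt_mem_nhds (half_pos hε))).and (eventually_ge_atTop 0)).exists
    filter_upwards [(hdecay (w s)).eventually (gt_mem_nhds (half_pos hε)),
      eventually_ge_atTop s, eventually_gt_atTop 0] with t hws hst ht
    have htp : 0 < t ^ (1 / p) := rpow_pos_of_pos ht _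
    calc w t / t ^ (1 / p) ≤ w s / t ^ (1 / p) + (tail s).toReal ^ (1 / q) := by
          rw [div_add' _ _ _ htp.ne', div_le_div_iff_of_pos_right htp]
          exact hbound s t hs0 hst
      _ < ε / 2 + ε / 2 := add_lt_add hws hs
      _ = ε := add_halves ε

end

theorem lintegral_exp_sub_lt_top {g : ℝ → ℝ} (hg : ContinuousOn g (Ici 0))
    (hlim : Tendsto (fun t => g t / t) atTop (𝓝 0)) :
    ∫⁻ t in Ioi 0, ENNReal.ofReal (exp (g t - t)) < ∞ := by
  obtain ⟨s, hs0, hs⟩ : ∃ s, 0 ≤ s ∧ ∀ t ≥ s, g t ≤ t / 2 := by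
    obtain ⟨s, hs⟩ := eventually_atTop.1
      ((hlim.eventually (gt_mem_nhds one_half_pos)).and (eventually_gt_atTop 0))
    refine ⟨max s 0, le_max_right _ _, fun t ht => ?_⟩
    obtain ⟨hgt, ht0⟩ := hs t (le_of_max_le_left ht)
    rw [div_lt_iff₀ ht0] at hgt
    linarith
  have hcont : ContinuousOn (fun t => exp (g t - t)) (Ici 0) := by fun_prop
  have hIcc : IntegrableOn (fun t => exp (g t - t)) (Icc 0 s) :=
    (hcont.mono Icc_subset_Ici_self).integrableOn_compact isCompact_Icc
  have hIoi : IntegrableOn (fun t => exp (g t - t)) (Ioi s) := by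
    refine (exp_neg_integrableOn_Ioi s one_half_pos).mono'
      ((hcont.mono fun t ht => hs0.trans (le_of_lt ht)).aestronglyMeasurable measurableSet_Ioi)
      ((ae_restrict_mem measurableSet_Ioi).mono fun t ht => ?_)
    rw [norm_of_nonneg (exp_nonneg _), exp_le_exp]
    linarith [hs t (le_of_lt ht)]
  refine ((hIcc.union hIoi).mono_set fun t ht => ?_).lintegral_lt_top
  rcases le_or_gt t s with hts | hts
  · exact Or.inl ⟨le_of_lt ht, hts⟩
  · exact Or.inr hts

/-- The critical integral in Moser's one-dimensional lemma exists for every `β > 0`: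
`w(t)/t^{1/p} → 0` and `∫₀^∞ e^{β w^p − t} dt < ∞`. -/
theorem moser_lemma_finiteness (q p : ℝ) (hq : 1 < q) (hpq : 1 / p + 1 / q = 1)
    (w w' : ℝ → ℝ)
    (hderiv : ∀ t ∈ Set.Ici (0:ℝ), HasDerivWithinAt w (w' t) (Set.Ici 0) t)
    (hcont : ContinuousOn w' (Set.Ici 0))
    (h0 : w 0 = 0) (hmono : ∀ t, 0 ≤ t → 0 ≤ w' t)
    (hint : (∫⁻ t in Set.Ioi (0:ℝ), ENNReal.ofReal (w' t ^ q)) < ⊤) :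
    Filter.Tendsto (fun t => w t / t ^ (1 / p)) Filter.atTop (nhds 0) ∧
    ∀ β : ℝ, 0 < β →
      (∫⁻ t in Set.Ioi (0:ℝ), ENNReal.ofReal (Real.exp (β * w t ^ p - t))) < ⊤ := by
  have hqp : q.HolderConjugate p :=
    Real.holderConjugate_iff.mpr ⟨hq, by simpa only [one_div, add_comm] using hpq⟩
  have hp := hqp.symm.pos
  have hlim := tendsto_div_rpow_one_div_atTop hqp hderiv hcont hmono hint.ne
  have hw_nonneg : ∀ t ∈ Ici (0 : ℝ), 0 ≤ w t := fun t ht =>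
    h0 ▸ monotoneOn_of_hasDerivWithinAt_Ici_nonneg hderiv hmono self_mem_Ici ht ht
  refine ⟨hlim, fun β hβ => lintegral_exp_sub_lt_top ?_ ?_⟩
  · have hwc : ContinuousOn w (Ici 0) := fun t ht => (hderiv t ht).continuousWithinAt
    exact continuousOn_const.mul (hwc.rpow_const fun _ _ => Or.inr hp.le)
  · have h := (hlim.rpow_const (Or.inr hp.le)).const_mul β
    rw [zero_rpow hp.ne', mul_zero] at h
    refine h.congr' ((eventually_gt_atTop 0).mono fun t ht => ?_)
    rw [div_rpow (hw_nonneg t ht.le) (rpow_nonneg ht.le _), one_div, rpow_inv_rpow ht.le hp.ne']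
    exact (mul_div_assoc _ _ _).symm
end

section
/- Let q > 1, p satisfy 1/p + 1/q = 1, and β > 1. For t₁ > 0 define w(t) = t₁^{1/p} · min(t/t₁, 1) for t ≥ 0. Then w(0) = 0, w is nondecreasing and Lipschitz with derivative w′(t) = t₁^{−1/q} for 0 < t < t₁ and w′(t) = 0 for t > t₁, ∫₀^∞ w′(t)^q dt = 1, and ∫₀^∞ e^{β w(t)^p − t} dt ≥ e^{(β−1) t₁}. In particular, for β > 1 the supremum of ∫₀^∞ e^{β w^p − t} dt over all nondecreasing Lipschitz w with w(0) = 0 and ∫₀^∞ (w′)^q dt ≤ 1 is +∞. -/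
/-!
The profile rises linearly with slope `t₁^{-1/q}` up to height `t₁^{1/p}` at `t₁`, so its
`q`-energy is `t₁^{-1} · t₁ = 1`; beyond `t₁` we have `w^p = t₁`, so the exponential integral is at
least `∫_{t₁}^∞ e^{β t₁ - t} dt = e^{(β-1) t₁}`, which is unbounded in `t₁` when `β > 1`.
-/

open MeasureTheory Real Set

noncomputable def ramp (a c t : ℝ) : ℝ := c * min (t / a) 1

section Ramp

variable {a c : ℝ}

@[simp]
lemma ramp_zero : ramp a c 0 = 0 := by simp [ramp]

lemma ramp_of_le (ha : 0 < a) {t : ℝ} (ht : a ≤ t) : ramp a c t = c := by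
  rw [ramp, min_eq_right ((one_le_div ha).2 ht), mul_one]

lemma monotone_ramp (ha : 0 < a) (hc : 0 ≤ c) : Monotone (ramp a c) := fun s t hst => by
  unfold ramp; gcongr

lemma lipschitzWith_ramp (ha : 0 < a) (hc : 0 ≤ c) :
    LipschitzWith (c / a).toNNReal (ramp a c) := by
  refine LipschitzWith.of_dist_le_mul fun s t => ?_
  rw [Real.coe_toNNReal _ (by positivity), Real.dist_eq, Real.dist_eq, ramp, ramp, ← mul_sub,
    abs_mul, abs_of_nonneg hc]
  calc c * |min (s / a) 1 - min (t / a) 1| ≤ c * |s / a - t / a| := by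
        gcongr ?_ * ?_
        simpa using abs_min_sub_min_le_max (s / a) 1 (t / a) 1
    _ = c / a * |s - t| := by rw [div_sub_div_same, abs_div, abs_of_pos ha]; ring

lemma deriv_ramp_of_lt (ha : 0 < a) {t : ℝ} (ht : t < a) : deriv (ramp a c) t = c / a := by
  have hlin : ramp a c =ᶠ[nhds t] fun s => c / a * s := by
    filter_upwards [Iio_mem_nhds ht] with s hs
    rw [ramp, min_eq_left ((div_le_one ha).2 hs.le)]
    ring
  rw [hlin.deriv_eq]
  simp

lemma deriv_ramp_of_gt (ha : 0 < a) {t : ℝ} (ht : a < t) : deriv (ramp a c) t = 0 := by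
  have hconst : ramp a c =ᶠ[nhds t] fun _ => c := by
    filter_upwards [Ioi_mem_nhds ht] with s hs
    exact ramp_of_le ha hs.le
  rw [hconst.deriv_eq, deriv_const]

lemma lintegral_Ioi_deriv_ramp_rpow (ha : 0 < a) {q : ℝ} (hq : 0 < q) :
    ∫⁻ t in Ioi 0, ENNReal.ofReal (deriv (ramp a c) t ^ q) = ENNReal.ofReal ((c / a) ^ q * a) := by
  have hramp : ∫⁻ t in Ioo 0 a, ENNReal.ofReal (deriv (ramp a c) t ^ q) =
      ENNReal.ofReal ((c / a) ^ q * a) := by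
    rw [setLIntegral_congr_fun measurableSet_Ioo fun t ht => by rw [deriv_ramp_of_lt ha ht.2],
      setLIntegral_const, Real.volume_Ioo, sub_zero, ENNReal.ofReal_mul' ha.le]
  have hflat : ∫⁻ t in Ioi a, ENNReal.ofReal (deriv (ramp a c) t ^ q) = 0 := by
    rw [setLIntegral_congr_fun measurableSet_Ioi fun t ht => by
      rw [deriv_ramp_of_gt ha ht, Real.zero_rpow hq.ne']]
    simp
  rw [← Ioc_union_Ioi_eq_Ioi ha.le, lintegral_union measurableSet_Ioi Ioc_disjoint_Ioi_same,
    setLIntegral_congr Ioo_ae_eq_Ioc.symm, hramp, hflat, add_zero]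

end Ramp

lemma lintegral_Ioi_exp_sub (a C : ℝ) :
    ∫⁻ t in Ioi a, ENNReal.ofReal (exp (C - t)) = ENNReal.ofReal (exp (C - a)) := by
  have hsplit : ∀ t, exp (C - t) = exp C * exp (-t) := fun t => by
    rw [← exp_add, sub_eq_add_neg]
  simp_rw [hsplit]
  rw [← ofReal_integral_eq_lintegral_ofReal ((integrableOn_exp_neg_Ioi a).const_mul _)
    (ae_of_all _ fun t => by positivity), integral_const_mul, integral_exp_neg_Ioi]

lemma ofReal_exp_sub_le_lintegral_Ioi_exp_sub {f : ℝ → ℝ} {a C : ℝ} (ha : 0 ≤ a)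
    (hf : ∀ t, a < t → f t = C) :
    ENNReal.ofReal (exp (C - a)) ≤ ∫⁻ t in Ioi 0, ENNReal.ofReal (exp (f t - t)) :=
  calc ENNReal.ofReal (exp (C - a)) = ∫⁻ t in Ioi a, ENNReal.ofReal (exp (C - t)) :=
        (lintegral_Ioi_exp_sub a C).symm
    _ = ∫⁻ t in Ioi a, ENNReal.ofReal (exp (f t - t)) :=
        setLIntegral_congr_fun measurableSet_Ioi fun t ht => by rw [hf t ht]
    _ ≤ ∫⁻ t in Ioi 0, ENNReal.ofReal (exp (f t - t)) := lintegral_mono_set (Ioi_subset_Ioi ha)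

lemma rpow_one_div_div_self {a p q : ℝ} (ha : 0 < a) (hpq : 1 / p + 1 / q = 1) :
    a ^ (1 / p) / a = a ^ (-(1 / q)) := by
  rw [← rpow_sub_one ha.ne', show 1 / p - 1 = -(1 / q) by linarith]

lemma lintegral_Ioi_deriv_ramp_rpow_eq_one {a p q : ℝ} (ha : 0 < a) (hq : 0 < q)
    (hpq : 1 / p + 1 / q = 1) :
    ∫⁻ t in Ioi 0, ENNReal.ofReal (deriv (ramp a (a ^ (1 / p))) t ^ q) = 1 := by
  rw [lintegral_Ioi_deriv_ramp_rpow ha hq, rpow_one_div_div_self ha hpq, ← rpow_mul ha.le,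
    neg_mul, one_div_mul_cancel hq.ne', rpow_neg_one, inv_mul_cancel₀ ha.ne', ENNReal.ofReal_one]

lemma ofReal_exp_le_lintegral_Ioi_exp_ramp {a p : ℝ} (ha : 0 < a) (hp : p ≠ 0) (β : ℝ) :
    ENNReal.ofReal (exp ((β - 1) * a)) ≤
      ∫⁻ t in Ioi 0, ENNReal.ofReal (exp (β * ramp a (a ^ (1 / p)) t ^ p - t)) := by
  have hplateau : ∀ t, a < t → β * ramp a (a ^ (1 / p)) t ^ p = β * a := fun t ht => by
    rw [ramp_of_le ha ht.le, ← rpow_mul ha.le, one_div_mul_cancel hp, rpow_one]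
  simpa only [sub_one_mul] using ofReal_exp_sub_le_lintegral_Ioi_exp_sub ha.le hplateau

lemma exists_pos_le_exp_mul {b : ℝ} (hb : 0 < b) (M : ℝ) : ∃ T, 0 < T ∧ M ≤ exp (b * T) := by
  refine ⟨max 1 (M / b), by positivity, ?_⟩
  calc M = b * (M / b) := by field_simp
    _ ≤ b * max 1 (M / b) := by gcongr; exact le_max_right _ _
    _ ≤ exp (b * max 1 (M / b)) := (le_add_of_nonneg_right zero_le_one).trans (add_one_le_exp _)

/-- Failure of Moser's one-dimensional lemma for `β > 1`, via the explicit family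
`w(t) = t₁^{1/p} min(t/t₁, 1)`; in particular the supremum over admissible `w` is `+∞`. -/
theorem moser_lemma_sharp (q p β t₁ : ℝ) (hq : 1 < q) (hpq : 1 / p + 1 / q = 1)
    (hβ : 1 < β) (ht₁ : 0 < t₁) (w : ℝ → ℝ)
    (hw : w = fun t => t₁ ^ (1 / p) * min (t / t₁) 1) :
    w 0 = 0 ∧ Monotone w ∧ (∃ K : NNReal, LipschitzWith K w) ∧
    (∀ t, 0 < t → t < t₁ → deriv w t = t₁ ^ (-(1 / q))) ∧
    (∀ t, t₁ < t → deriv w t = 0) ∧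
    (∫⁻ t in Set.Ioi (0:ℝ), ENNReal.ofReal (deriv w t ^ q)) = 1 ∧
    ENNReal.ofReal (Real.exp ((β - 1) * t₁)) ≤
      (∫⁻ t in Set.Ioi (0:ℝ), ENNReal.ofReal (Real.exp (β * w t ^ p - t))) ∧
    ∀ M : ℝ, ∃ v : ℝ → ℝ, v 0 = 0 ∧ Monotone v ∧ (∃ K : NNReal, LipschitzWith K v) ∧
      (∫⁻ t in Set.Ioi (0:ℝ), ENNReal.ofReal (deriv v t ^ q)) ≤ 1 ∧
      ENNReal.ofReal M ≤
        ∫⁻ t in Set.Ioi (0:ℝ), ENNReal.ofReal (Real.exp (β * v t ^ p - t)) := by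
  have hq0 : 0 < q := by linarith
  have hp : p ≠ 0 := by
    rintro rfl
    rw [div_zero, zero_add, div_eq_one_iff_eq hq0.ne'] at hpq
    linarith
  change w = ramp t₁ (t₁ ^ (1 / p)) at hw
  subst hw
  refine ⟨ramp_zero, monotone_ramp ht₁ (by positivity), ⟨_, lipschitzWith_ramp ht₁ (by positivity)⟩,
    fun t _ ht => (deriv_ramp_of_lt ht₁ ht).trans (rpow_one_div_div_self ht₁ hpq),
    fun t ht => deriv_ramp_of_gt ht₁ ht, lintegral_Ioi_deriv_ramp_rpow_eq_one ht₁ hq0 hpq,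
    ofReal_exp_le_lintegral_Ioi_exp_ramp ht₁ hp β, fun M => ?_⟩
  obtain ⟨T, hT, hMT⟩ := exists_pos_le_exp_mul (sub_pos.2 hβ) M
  exact ⟨ramp T (T ^ (1 / p)), ramp_zero, monotone_ramp hT (by positivity),
    ⟨_, lipschitzWith_ramp hT (by positivity)⟩,
    (lintegral_Ioi_deriv_ramp_rpow_eq_one hT hq0 hpq).le,
    (ENNReal.ofReal_le_ofReal hMT).trans (ofReal_exp_le_lintegral_Ioi_exp_ramp hT hp β)⟩
end

section
/- Let Ω ⊆ ℝ_{>0} × ℝ be open, and let F : Ω × ℝ → ℝ be continuous with F(x, 0) = 0 for all x ∈ Ω, and suppose that F(x,s)/s² → +∞ as |s| → ∞ uniformly in x ∈ Ω (i.e., for every M > 0 there is R > 0 such that F(x,s) ≥ M s² whenever x ∈ Ω and |s| ≥ R). Then for every nonnegative u ∈ C_c^∞(Ω) with u ≢ 0, the functional I(tu) := (t²/2) ∫_Ω (|x₁ ∂_{x₁}u|² + |∂_{x₂}u|²) dμ − ∫_Ω F(x, t u(x)) dμ(x) tends to −∞ as t → +∞. -/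
open MeasureTheory Real Set Filter

/-- Lemma 4.3: under the superquadraticity condition (f₂), the energy functional
`I(tu) = (t²/2)‖∇_𝔹 u‖₂² − ∫_Ω F(x, tu) dμ` tends to `−∞` along rays. -/
theorem energy_tendsto_atBot (Ω : Set (ℝ × ℝ)) (hΩ : IsOpen Ω)
    (hΩ' : Ω ⊆ {p : ℝ × ℝ | 0 < p.1})
    (F : (ℝ × ℝ) → ℝ → ℝ)
    (hF : ContinuousOn (fun q : (ℝ × ℝ) × ℝ => F q.1 q.2) (Ω ×ˢ Set.univ))
    (hF0 : ∀ x ∈ Ω, F x 0 = 0)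
    (hsq : ∀ M : ℝ, 0 < M → ∃ R : ℝ, 0 < R ∧ ∀ x ∈ Ω, ∀ s : ℝ, R ≤ |s| → M * s ^ 2 ≤ F x s)
    (u : ℝ × ℝ → ℝ) (hu : ContDiff ℝ (⊤ : ℕ∞) u) (hc : HasCompactSupport u)
    (hs : tsupport u ⊆ Ω) (hpos : ∀ x, 0 ≤ u x) (hne : u ≠ 0) :
    Filter.Tendsto
      (fun t : ℝ => t ^ 2 / 2 * (∫ p in Ω, coneGradSq u p ∂coneMeasure) -
        ∫ p in Ω, F p (t * u p) ∂coneMeasure)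
      Filter.atTop Filter.atBot := by
  set μ := coneMeasure with hμdef
  set K := tsupport u with hKdef
  have hΩS : Ω ⊆ {p : ℝ × ℝ | 0 < p.1} := hΩ'
  have hΩm : MeasurableSet Ω := hΩ.measurableSet
  have hKm : MeasurableSet K := (isClosed_tsupport u).measurableSet
  have hKc : IsCompact K := hc
  have hKΩ : K ⊆ Ω := hs
  -- u is nonzero somewhere
  obtain ⟨p₀, hp₀⟩ : ∃ p, u p ≠ 0 := Function.ne_iff.mp hne
  have hp₀supp : p₀ ∈ Function.support u := hp₀
  have hKne : K.Nonempty := ⟨p₀, subset_tsupport u hp₀supp⟩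
  -- μ K < ∞
  have hμK : μ K < ⊤ := by
    obtain ⟨q, hqK, hq⟩ := hKc.exists_isMinOn hKne continuous_fst.continuousOn
    have hq1 : 0 < q.1 := hΩS (hKΩ hqK)
    have h1 : μ K = ∫⁻ p in K, ENNReal.ofReal (1 / p.1)
        ∂(volume.restrict {p : ℝ × ℝ | 0 < p.1}) := withDensity_apply _ hKm
    rw [h1]
    calc ∫⁻ p in K, ENNReal.ofReal (1 / p.1)
          ∂(volume.restrict {p : ℝ × ℝ | 0 < p.1})
        ≤ ∫⁻ _ in K, ENNReal.ofReal (1 / q.1)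
          ∂(volume.restrict {p : ℝ × ℝ | 0 < p.1}) := by
          refine setLIntegral_mono' hKm fun p hp => ?_
          exact ENNReal.ofReal_le_ofReal (one_div_le_one_div_of_le hq1 (hq hp))
      _ = ENNReal.ofReal (1 / q.1) * (volume.restrict {p : ℝ × ℝ | 0 < p.1}) K :=
          setLIntegral_const _ _
      _ ≤ ENNReal.ofReal (1 / q.1) * volume K :=
          mul_le_mul_right (Measure.restrict_le_self _) _
      _ < ⊤ := ENNReal.mul_lt_top ENNReal.ofReal_lt_top hKc.measure_lt_top
  -- positivity of μ on open nonempty subsets of Ω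
  have hμpos : ∀ A : Set (ℝ × ℝ), IsOpen A → A.Nonempty → A ⊆ Ω → 0 < μ A := by
    intro A hA hAne hAΩ
    obtain ⟨a, ha⟩ := hAne
    have ha1 : 0 < a.1 := hΩS (hAΩ ha)
    obtain ⟨ε, hε, hball⟩ := Metric.isOpen_iff.mp hA a ha
    have hballm : MeasurableSet (Metric.ball a ε) := Metric.isOpen_ball.measurableSet
    have hμball : ENNReal.ofReal (1 / (a.1 + ε)) * volume (Metric.ball a ε) ≤ μ A := by
      have h1 : μ A = ∫⁻ p in A, ENNReal.ofReal (1 / p.1)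
          ∂(volume.restrict {p : ℝ × ℝ | 0 < p.1}) := withDensity_apply _ hA.measurableSet
      rw [h1]
      calc ENNReal.ofReal (1 / (a.1 + ε)) * volume (Metric.ball a ε)
          = ∫⁻ _ in Metric.ball a ε, ENNReal.ofReal (1 / (a.1 + ε))
            ∂(volume.restrict {p : ℝ × ℝ | 0 < p.1}) := by
            rw [setLIntegral_const, Measure.restrict_apply hballm,
              Set.inter_eq_left.mpr (fun p hp => hΩS (hAΩ (hball hp)))]
        _ ≤ ∫⁻ p in Metric.ball a ε, ENNReal.ofReal (1 / p.1)
            ∂(volume.restrict {p : ℝ × ℝ | 0 < p.1}) := by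
            refine setLIntegral_mono' hballm fun p hp => ?_
            refine ENNReal.ofReal_le_ofReal (one_div_le_one_div_of_le (hΩS (hAΩ (hball hp))) ?_)
            have hd : dist p.1 a.1 ≤ dist p a := by
              rw [Prod.dist_eq]; exact le_max_left _ _
            have hd2 : dist p a < ε := Metric.mem_ball.mp hp
            have : p.1 - a.1 ≤ dist p.1 a.1 := by
              rw [Real.dist_eq]; exact le_abs_self _
            linarith
        _ ≤ ∫⁻ p in A, ENNReal.ofReal (1 / p.1)
            ∂(volume.restrict {p : ℝ × ℝ | 0 < p.1}) :=
            lintegral_mono_set hball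
    refine lt_of_lt_of_le ?_ hμball
    exact ENNReal.mul_pos (ENNReal.ofReal_pos.mpr (by positivity)).ne'
      (Metric.measure_ball_pos volume a hε).ne'
  -- key integrability lemma
  have key : ∀ g : ℝ × ℝ → ℝ, ContinuousOn g Ω → (∀ p ∈ Ω, p ∉ K → g p = 0) →
      IntegrableOn g Ω μ := by
    intro g hg hg0
    obtain ⟨D, hD⟩ := hKc.exists_bound_of_continuousOn (hg.mono hKΩ)
    refine Integrable.mono' (g := fun p => K.indicator (fun _ => D) p) ?_
      (hg.aestronglyMeasurable hΩm) ?_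
    · rw [integrable_indicator_iff hKm]
      refine integrableOn_const ?_
      rw [Measure.restrict_apply hKm, Set.inter_eq_left.mpr hKΩ]
      exact hμK.ne
    · refine (ae_restrict_iff' hΩm).mpr (ae_of_all _ fun p hp => ?_)
      by_cases hpK : p ∈ K
      · simpa [Set.indicator_of_mem hpK] using hD p hpK
      · simp [Set.indicator_of_notMem hpK, hg0 p hp hpK]
  -- the gradient energy constant
  set G := ∫ p in Ω, coneGradSq u p ∂μ with hGdef
  have hG : 0 ≤ G := setIntegral_nonneg hΩm fun p _ => by
    unfold coneGradSq; positivity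
  -- integrability of u²
  have hIint : IntegrableOn (fun p => u p ^ 2) Ω μ := by
    refine key _ ((hu.continuous.pow 2).continuousOn) fun p _ hpK => ?_
    rw [image_eq_zero_of_notMem_tsupport hpK]; ring
  set I := ∫ p in Ω, u p ^ 2 ∂μ with hIdef
  have hI : 0 < I := by
    rw [hIdef, integral_pos_iff_support_of_nonneg (fun p => sq_nonneg _) hIint]
    have hsupp : (Function.support fun p => u p ^ 2) = Function.support u := by
      ext p; simp [pow_eq_zero_iff]
    rw [hsupp, Measure.restrict_apply hu.continuous.isOpen_support.measurableSet,
      Set.inter_eq_left.mpr ((subset_tsupport u).trans hKΩ)]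
    exact hμpos _ hu.continuous.isOpen_support ⟨p₀, hp₀supp⟩
      ((subset_tsupport u).trans hKΩ)
  set M := (G / 2 + 1) / I with hMdef
  have hM : 0 < M := div_pos (by linarith) hI
  have hMI : M * I = G / 2 + 1 := div_mul_cancel₀ _ hI.ne'
  obtain ⟨R, hR, hRF⟩ := hsq M hM
  -- bound on F on K × [-R, R]
  obtain ⟨C, hC⟩ := (hKc.prod isCompact_Icc).exists_bound_of_continuousOn
    (hF.mono (Set.prod_mono hKΩ (Set.subset_univ (Set.Icc (-R) R))))
  have hC0 : 0 ≤ C := by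
    obtain ⟨q0, hq0⟩ := hKne
    exact (norm_nonneg _).trans (hC (q0, 0) ⟨hq0, by simp [Set.mem_Icc]; linarith⟩)
  set B := C + M * R ^ 2 with hBdef
  have hB : 0 ≤ B := by positivity
  set κ := (μ K).toReal with hκdef
  have hκ : 0 ≤ κ := ENNReal.toReal_nonneg
  -- integrability of the indicator
  have hind : Integrable (K.indicator fun _ => B) (μ.restrict Ω) := by
    rw [integrable_indicator_iff hKm]
    refine integrableOn_const ?_
    rw [Measure.restrict_apply hKm, Set.inter_eq_left.mpr hKΩ]
    exact hμK.ne
  -- main bound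
  have hbound : ∀ t : ℝ, 0 ≤ t →
      t ^ 2 / 2 * G - (∫ p in Ω, F p (t * u p) ∂μ) ≤ -t ^ 2 + B * κ := by
    intro t ht
    have hFcont : ContinuousOn (fun p => F p (t * u p)) Ω := by
      have h1 : Continuous fun p : ℝ × ℝ => (p, t * u p) :=
        continuous_id.prodMk (continuous_const.mul hu.continuous)
      exact hF.comp h1.continuousOn fun p hp => ⟨hp, Set.mem_univ _⟩
    have hFint : IntegrableOn (fun p => F p (t * u p)) Ω μ := by
      refine key _ hFcont fun p hp hpK => ?_
      rw [image_eq_zero_of_notMem_tsupport hpK, mul_zero]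
      exact hF0 p hp
    have hlowint : Integrable
        (fun p => M * t ^ 2 * u p ^ 2 - K.indicator (fun _ => B) p) (μ.restrict Ω) :=
      (hIint.const_mul (M * t ^ 2)).sub hind
    have hpt : ∀ p ∈ Ω,
        M * t ^ 2 * u p ^ 2 - K.indicator (fun _ => B) p ≤ F p (t * u p) := by
      intro p hp
      by_cases hpK : p ∈ K
      · rw [Set.indicator_of_mem hpK]
        by_cases hr : R ≤ |t * u p|
        · have h2 := hRF p hp (t * u p) hr
          have : (t * u p) ^ 2 = t ^ 2 * u p ^ 2 := mul_pow t (u p) 2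
          nlinarith
        · push_neg at hr
          have habs := abs_lt.mp hr
          have hFC := hC (p, t * u p) ⟨hpK, Set.mem_Icc.mpr ⟨habs.1.le, habs.2.le⟩⟩
          have hFlow : -C ≤ F p (t * u p) := by
            rw [Real.norm_eq_abs] at hFC
            linarith [(abs_le.mp hFC).1]
          have hsq2 : (t * u p) ^ 2 ≤ R ^ 2 := sq_le_sq' (by linarith) habs.2.le
          have : (t * u p) ^ 2 = t ^ 2 * u p ^ 2 := mul_pow t (u p) 2
          nlinarith
      · rw [Set.indicator_of_notMem hpK, image_eq_zero_of_notMem_tsupport hpK, mul_zero,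
          hF0 p hp]
        ring_nf
        nlinarith
    have hmono := setIntegral_mono_on hlowint hFint hΩm hpt
    have hcalc : ∫ p in Ω,
        (M * t ^ 2 * u p ^ 2 - K.indicator (fun _ => B) p) ∂μ = M * t ^ 2 * I - B * κ := by
      rw [integral_sub (hIint.const_mul (M * t ^ 2)) hind, integral_const_mul,
        integral_indicator_const B hKm, measureReal_def, Measure.restrict_apply hKm,
        Set.inter_eq_left.mpr hKΩ, smul_eq_mul, hIdef, hκdef]
      ring_nf
    rw [hcalc] at hmono
    nlinarith [sq_nonneg t, sq_nonneg (t * u p₀)]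
  have hlim : Tendsto (fun t : ℝ => -t ^ 2 + B * κ) atTop atBot := by
    have h2 : Tendsto (fun t : ℝ => t ^ 2) atTop atTop := tendsto_pow_atTop two_ne_zero
    exact tendsto_atBot_add_const_right _ (B * κ) (tendsto_neg_atTop_atBot.comp h2)
  refine tendsto_atBot_mono' atTop ?_ hlim
  filter_upwards [eventually_ge_atTop (0 : ℝ)] with t ht using hbound t ht
end
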